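/- arXiv:2202.10717 — 7 statements merged into one kernel-verified Lean document; each statement's English description precedes it below -/
import Mathlib

section
/- The hockey-stick contraction coefficient is attained on orthogonal pure states: for any quantum channel N acting on a system of dimension at least 2 and any γ ≥ 1, η_γ(N) = sup over pairs of orthogonal unit vectors |φ⟩ ⊥ |ψ⟩ of E_γ(N(|φ⟩⟨φ|) ‖ N(|ψ⟩⟨ψ|)). -/
open scoped BigOperators ComplexOrder

/-- Trace of the positive part of a Hermitian matrix (0 if not Hermitian). -/
noncomputable def posPartTrace {n : Type*} [Fintype n] [DecidableEq n]
    (X : Matrix n n ℂ) : ℝ :=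
  if h : X.IsHermitian then ∑ i, max (h.eigenvalues i) 0 else 0

/-- The quantum hockey-stick divergence `E_γ(ρ‖σ) = Tr[(ρ - γσ)₊]`. -/
noncomputable def hsDiv {n : Type*} [Fintype n] [DecidableEq n]
    (γ : ℝ) (ρ σ : Matrix n n ℂ) : ℝ :=
  posPartTrace (ρ - (γ : ℂ) • σ)

/-- A density operator: positive semidefinite with unit trace. -/
def IsDensity {n : Type*} [Fintype n] [DecidableEq n] (ρ : Matrix n n ℂ) : Prop :=
  ρ.PosSemidef ∧ ρ.trace = 1

/-- Trace norm: the sum of the singular values. -/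
noncomputable def traceNorm {n : Type*} [Fintype n] [DecidableEq n]
    (X : Matrix n n ℂ) : ℝ :=
  ∑ i, Real.sqrt ((Matrix.posSemidef_conjTranspose_mul_self X).isHermitian.eigenvalues i)

/-- Completely positive trace-preserving linear map. -/
def IsCPTP {n m : Type*} [Fintype n] [DecidableEq n] [Fintype m] [DecidableEq m]
    (Φ : Matrix n n ℂ →ₗ[ℂ] Matrix m m ℂ) : Prop :=
  (∀ k : ℕ, ∀ X : Matrix (Fin k × n) (Fin k × n) ℂ, X.PosSemidef →
      (Matrix.of fun p q : Fin k × m =>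
        Φ (Matrix.of fun i j => X (p.1, i) (q.1, j)) p.2 q.2).PosSemidef) ∧
  (∀ X, (Φ X).trace = X.trace)

/-- Contraction coefficient of a channel for the hockey-stick divergence. -/
noncomputable def contractionCoeff {n : Type*} [Fintype n] [DecidableEq n]
    (γ : ℝ) (Φ : Matrix n n ℂ →ₗ[ℂ] Matrix n n ℂ) : ℝ :=
  sSup {x : ℝ | ∃ ρ σ : Matrix n n ℂ, IsDensity ρ ∧ IsDensity σ ∧
    0 < hsDiv γ ρ σ ∧ x = hsDiv γ (Φ ρ) (Φ σ) / hsDiv γ ρ σ}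


/-!
For an orthonormal pair `φ ⊥ ψ` the difference `|φ⟩⟨φ| - γ|ψ⟩⟨ψ|` has positive part `|φ⟩⟨φ|`, so
`E_γ = 1` there and the right-hand side is at most `η_γ(N)`.

Conversely, let `ρ - γσ = ∑ₖ λₖ |eₖ⟩⟨eₖ|` in an orthonormal eigenbasis and split `λₖ = aₖ - bₖ` into
positive and negative parts. Then `p = ∑ aₖ = E_γ(ρ‖σ) ≤ 1`, and taking traces gives
`q = ∑ bₖ = p + γ - 1 ≥ γ p`. Lowering the negative weights by the factor `γ p / q ≤ 1` can only
increase `N(ρ - γσ)`, and turns it into `∑ₖₗ (aₖ bₗ / q) (N(|eₖ⟩⟨eₖ|) - γ N(|eₗ⟩⟨eₗ|))`, whose diagonal terms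
vanish because `aₖ bₖ = 0`. Since `Tr[X₊] = max {Re Tr[T X] | 0 ≤ T ≤ 1}` is monotone and convex,
`E_γ(N(ρ)‖N(σ)) ≤ p · sup_{φ ⊥ ψ} E_γ(N(φ)‖N(ψ))`.
-/

open Matrix

namespace Matrix

variable {n R : Type*}

lemma isHermitian_sum_smul {ι : Type*} [Fintype ι] (c : ι → ℝ) {X : ι → Matrix n n ℂ}
    (hX : ∀ i, (X i).IsHermitian) : (∑ i, c i • X i).IsHermitian :=
  isSelfAdjoint_sum _ fun i _ => (hX i).smul (.all (c i))

variable [Fintype n]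

lemma trace_mul_diagonal [DecidableEq n] [NonUnitalNonAssocSemiring R] (M : Matrix n n R)
    (d : n → R) : (M * diagonal d).trace = ∑ i, M i i * d i := by
  simp [trace, mul_diagonal]

lemma trace_vecMulVec_mul_vecMulVec [CommSemiring R] (u v w x : n → R) :
    (vecMulVec u v * vecMulVec w x).trace = (v ⬝ᵥ w) * (x ⬝ᵥ u) := by
  rw [vecMulVec_mul_vecMulVec, trace_vecMulVec, dotProduct_smul, smul_eq_mul, dotProduct_comm u]

lemma one_sub_vecMulVec_posSemidef [DecidableEq n] [CommRing R] [PartialOrder R] [StarRing R]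
    [StarOrderedRing R] {φ : n → R} (hφ : star φ ⬝ᵥ φ = 1) :
    (1 - vecMulVec φ (star φ)).PosSemidef := by
  set P := vecMulVec φ (star φ)
  have hP : Pᴴ = P := (posSemidef_vecMulVec_self_star φ).isHermitian
  have hPP : P * P = P := by simp only [P, vecMulVec_mul_vecMulVec, hφ, one_smul]
  have : 1 - P = (1 - P)ᴴ * (1 - P) := by
    rw [conjTranspose_sub, conjTranspose_one, hP, Matrix.sub_mul, Matrix.mul_sub, Matrix.mul_sub,
      hPP]
    simp
  rw [this]
  exact posSemidef_conjTranspose_mul_self _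

namespace IsHermitian

variable {𝕜 : Type*} [RCLike 𝕜] [DecidableEq n] {Z : Matrix n n 𝕜}

lemma star_eigenvectorBasis_dotProduct (hZ : Z.IsHermitian) (i j : n) :
    star ⇑(hZ.eigenvectorBasis i) ⬝ᵥ ⇑(hZ.eigenvectorBasis j) = if i = j then 1 else 0 := by
  rw [dotProduct_comm, ← EuclideanSpace.inner_eq_star_dotProduct]
  exact orthonormal_iff_ite.mp hZ.eigenvectorBasis.orthonormal i j

lemma eq_sum_eigenvalues_smul_vecMulVec (hZ : Z.IsHermitian) :
    Z = ∑ i, hZ.eigenvalues i •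
      vecMulVec ⇑(hZ.eigenvectorBasis i) (star ⇑(hZ.eigenvectorBasis i)) := by
  conv_lhs => rw [hZ.spectral_theorem, Unitary.conjStarAlgAut_apply]
  ext i j
  simp only [diagonal, Function.comp_apply, mul_apply, eigenvectorUnitary_apply, of_apply, mul_ite,
    mul_zero, Finset.sum_ite_eq', Finset.mem_univ, ↓reduceIte, star_apply, RCLike.star_def,
    sum_apply, smul_apply, vecMulVec_apply, Pi.star_apply, RCLike.real_smul_eq_coe_mul]
  exact Finset.sum_congr rfl fun k _ => by ring

lemma re_trace_eq_sum_eigenvalues (hZ : Z.IsHermitian) :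
    RCLike.re Z.trace = ∑ i, hZ.eigenvalues i := by
  simp [hZ.trace_eq_sum_eigenvalues]

lemma trace_mul_eq_sum_eigenvalues (hZ : Z.IsHermitian) (T : Matrix n n 𝕜) :
    (T * Z).trace = ∑ i, ((hZ.eigenvectorUnitary : Matrix n n 𝕜)ᴴ * T *
      hZ.eigenvectorUnitary) i i * hZ.eigenvalues i := by
  set U : Matrix n n 𝕜 := ↑hZ.eigenvectorUnitary
  set D : Matrix n n 𝕜 := diagonal (RCLike.ofReal ∘ hZ.eigenvalues)
  have hZ' : Z = U * D * Uᴴ := hZ.spectral_theorem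
  calc (T * Z).trace = ((T * U * D) * Uᴴ).trace := by rw [hZ']; simp only [mul_assoc]
    _ = (Uᴴ * T * U * D).trace := by rw [trace_mul_comm]; simp only [mul_assoc]
    _ = _ := by rw [trace_mul_diagonal]; rfl

end IsHermitian

end Matrix

section PosPartTrace

variable {n : Type*} [Fintype n] [DecidableEq n]

lemma posPartTrace_of_isHermitian {Z : Matrix n n ℂ} (hZ : Z.IsHermitian) :
    posPartTrace Z = ∑ i, max (hZ.eigenvalues i) 0 :=
  dif_pos hZ

lemma posPartTrace_of_posSemidef {Z : Matrix n n ℂ} (hZ : Z.PosSemidef) :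
    posPartTrace Z = Z.trace.re := by
  rw [posPartTrace_of_isHermitian hZ.isHermitian, ← RCLike.re_to_complex,
    hZ.isHermitian.re_trace_eq_sum_eigenvalues]
  simp [hZ.eigenvalues_nonneg]

lemma re_trace_mul_le_posPartTrace {T Z : Matrix n n ℂ} (hT : T.PosSemidef)
    (hT₁ : (1 - T).PosSemidef) (hZ : Z.IsHermitian) : (T * Z).trace.re ≤ posPartTrace Z := by
  set U : Matrix n n ℂ := ↑hZ.eigenvectorUnitary
  have hW₀ := hT.conjTranspose_mul_mul_same U
  have hW₁ : (1 - Uᴴ * T * U).PosSemidef := by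
    have := hT₁.conjTranspose_mul_mul_same U
    rwa [Matrix.mul_sub, Matrix.sub_mul, Matrix.mul_one, ← Matrix.star_eq_conjTranspose,
      Unitary.coe_star_mul_self] at this
  rw [hZ.trace_mul_eq_sum_eigenvalues, posPartTrace_of_isHermitian hZ, Complex.re_sum]
  refine Finset.sum_le_sum fun i _ => ?_
  have h₀ := (Complex.nonneg_iff.mp (hW₀.diag_nonneg (i := i))).1
  have h₁ := (Complex.nonneg_iff.mp (hW₁.diag_nonneg (i := i))).1
  simp only [Matrix.sub_apply, Matrix.one_apply_eq, Complex.sub_re, Complex.one_re,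
    sub_nonneg] at h₁
  simp only [RCLike.ofReal_eq_complex_ofReal, Complex.mul_re, Complex.ofReal_re, Complex.ofReal_im,
    mul_zero, sub_zero]
  nlinarith [le_max_left (hZ.eigenvalues i) 0, le_max_right (hZ.eigenvalues i) 0]

lemma exists_re_trace_mul_eq_posPartTrace {Z : Matrix n n ℂ} (hZ : Z.IsHermitian) :
    ∃ T : Matrix n n ℂ, T.PosSemidef ∧ (1 - T).PosSemidef ∧
      (T * Z).trace.re = posPartTrace Z := by
  set U : Matrix n n ℂ := ↑hZ.eigenvectorUnitary
  have hU : Uᴴ * U = 1 := Unitary.coe_star_mul_self hZ.eigenvectorUnitary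
  have hU' : U * Uᴴ = 1 := Unitary.coe_mul_star_self hZ.eigenvectorUnitary
  set c : n → ℂ := fun i => if 0 < hZ.eigenvalues i then 1 else 0
  refine ⟨U * diagonal c * Uᴴ, ?_, ?_, ?_⟩
  · refine (PosSemidef.diagonal fun i => ?_).mul_mul_conjTranspose_same U
    simp only [c]; split_ifs <;> norm_num
  · have hd : diagonal (1 - c) = 1 - diagonal c := by
      rw [← diagonal_one]; exact (diagonal_sub _ _).symm
    have : 1 - U * diagonal c * Uᴴ = U * diagonal (1 - c) * Uᴴ := by
      rw [hd, Matrix.mul_sub, Matrix.sub_mul, Matrix.mul_one, hU']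
    rw [this]
    refine (PosSemidef.diagonal fun i => ?_).mul_mul_conjTranspose_same U
    simp only [c, Pi.sub_apply, Pi.one_apply]; split_ifs <;> norm_num
  · have : Uᴴ * (U * diagonal c * Uᴴ) * U = diagonal c := by
      simp only [← mul_assoc, hU, one_mul]; rw [mul_assoc, hU, mul_one]
    rw [hZ.trace_mul_eq_sum_eigenvalues, this, posPartTrace_of_isHermitian hZ, Complex.re_sum]
    refine Finset.sum_congr rfl fun i _ => ?_
    simp only [diagonal_apply_eq, c]
    split_ifs with h
    · simp [h.le]
    · simp [not_lt.mp h]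

lemma re_trace_mul_nonneg {T P : Matrix n n ℂ} (hT : T.PosSemidef) (hP : P.PosSemidef) :
    0 ≤ (T * P).trace.re := by
  rw [hP.isHermitian.trace_mul_eq_sum_eigenvalues, Complex.re_sum]
  refine Finset.sum_nonneg fun i _ => ?_
  have h₀ := (Complex.nonneg_iff.mp ((hT.conjTranspose_mul_mul_same
    (hP.isHermitian.eigenvectorUnitary : Matrix n n ℂ)).diag_nonneg (i := i))).1
  simp only [RCLike.ofReal_eq_complex_ofReal, Complex.mul_re, Complex.ofReal_re, Complex.ofReal_im,
    mul_zero, sub_zero]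
  exact mul_nonneg h₀ (hP.eigenvalues_nonneg i)

lemma posPartTrace_mono {X Y : Matrix n n ℂ} (hX : X.IsHermitian) (hY : Y.IsHermitian)
    (hXY : (Y - X).PosSemidef) : posPartTrace X ≤ posPartTrace Y := by
  obtain ⟨T, hT, hT₁, hTX⟩ := exists_re_trace_mul_eq_posPartTrace hX
  have hsplit : T * Y = T * X + T * (Y - X) := by rw [← Matrix.mul_add, add_sub_cancel]
  have := re_trace_mul_nonneg hT hXY
  calc posPartTrace X = (T * X).trace.re := hTX.symm
    _ ≤ (T * Y).trace.re := by rw [hsplit, trace_add, Complex.add_re]; linarith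
    _ ≤ posPartTrace Y := re_trace_mul_le_posPartTrace hT hT₁ hY

lemma posPartTrace_sum_smul_le {ι : Type*} [Fintype ι] {c : ι → ℝ} (hc : ∀ i, 0 ≤ c i)
    {X : ι → Matrix n n ℂ} (hX : ∀ i, (X i).IsHermitian) :
    posPartTrace (∑ i, c i • X i) ≤ ∑ i, c i * posPartTrace (X i) := by
  obtain ⟨T, hT, hT₁, hTX⟩ := exists_re_trace_mul_eq_posPartTrace (isHermitian_sum_smul c hX)
  rw [← hTX, Matrix.mul_sum, trace_sum, Complex.re_sum]
  refine Finset.sum_le_sum fun i _ => ?_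
  rw [Matrix.mul_smul, trace_smul, Complex.smul_re, smul_eq_mul]
  exact mul_le_mul_of_nonneg_left (re_trace_mul_le_posPartTrace hT hT₁ (hX i)) (hc i)

lemma hsDiv_eq_posPartTrace (γ : ℝ) (ρ σ : Matrix n n ℂ) :
    hsDiv γ ρ σ = posPartTrace (ρ - γ • σ) := by
  rw [hsDiv, Complex.coe_smul]

lemma hsDiv_le_one {ρ σ : Matrix n n ℂ} (hρ : IsDensity ρ) (hσ : σ.PosSemidef) {γ : ℝ}
    (hγ : 0 ≤ γ) : hsDiv γ ρ σ ≤ 1 := by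
  have := posPartTrace_mono (hρ.1.isHermitian.sub (hσ.smul hγ).isHermitian) hρ.1.isHermitian
    (by rw [sub_sub_cancel]; exact hσ.smul hγ)
  rwa [posPartTrace_of_posSemidef hρ.1, hρ.2, Complex.one_re, ← hsDiv_eq_posPartTrace] at this

end PosPartTrace

section PureStates

variable {n : Type*} [Fintype n] [DecidableEq n]

omit [DecidableEq n] in
lemma star_dotProduct_self_eq_one_iff (φ : n → ℂ) :
    star φ ⬝ᵥ φ = 1 ↔ ∑ i, ‖φ i‖ ^ 2 = 1 := by
  have : star φ ⬝ᵥ φ = ((∑ i, ‖φ i‖ ^ 2 : ℝ) : ℂ) := by simp [dotProduct, Complex.conj_mul']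
  rw [this]
  exact_mod_cast Iff.rfl

lemma isDensity_vecMulVec {φ : n → ℂ} (hφ : star φ ⬝ᵥ φ = 1) :
    IsDensity (vecMulVec φ (star φ)) :=
  ⟨posSemidef_vecMulVec_self_star φ, by rw [trace_vecMulVec, dotProduct_comm, hφ]⟩

lemma hsDiv_vecMulVec_eq_one {γ : ℝ} (hγ : 0 ≤ γ) {φ ψ : n → ℂ}
    (hφ : star φ ⬝ᵥ φ = 1) (hφψ : star φ ⬝ᵥ ψ = 0) :
    hsDiv γ (vecMulVec φ (star φ)) (vecMulVec ψ (star ψ)) = 1 := by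
  have hPφ := posSemidef_vecMulVec_self_star φ
  have hPψ := posSemidef_vecMulVec_self_star ψ
  refine le_antisymm (hsDiv_le_one (isDensity_vecMulVec hφ) hPψ hγ) ?_
  have h := re_trace_mul_le_posPartTrace hPφ (one_sub_vecMulVec_posSemidef hφ)
    (hPφ.isHermitian.sub (hPψ.smul hγ).isHermitian)
  rwa [Matrix.mul_sub, Matrix.mul_smul, trace_sub, trace_smul, trace_vecMulVec_mul_vecMulVec,
    trace_vecMulVec_mul_vecMulVec, hφ, hφψ, mul_one, zero_mul, smul_zero, sub_zero,
    Complex.one_re, ← hsDiv_eq_posPartTrace] at h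

end PureStates

lemma sum_smul_sub_smul_sum_eq_sum_prod {ι E : Type*} [Fintype ι] [AddCommGroup E] [Module ℝ E]
    (a b : ι → ℝ) (hb : ∑ k, b k ≠ 0) (γ : ℝ) (x : ι → E) :
    ∑ k, a k • x k - (γ * (∑ k, a k) / ∑ k, b k) • ∑ k, b k • x k =
      ∑ kl : ι × ι, (a kl.1 * b kl.2 / ∑ k, b k) • (x kl.1 - γ • x kl.2) := by
  simp only [Fintype.sum_prod_type, smul_sub, Finset.sum_sub_distrib, smul_smul, Finset.smul_sum]
  congr 1
  · refine Finset.sum_congr rfl fun k _ => ?_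
    rw [← Finset.sum_smul, ← Finset.sum_div, ← Finset.mul_sum, mul_div_assoc, div_self hb, mul_one]
  · rw [Finset.sum_comm]
    refine Finset.sum_congr rfl fun l _ => ?_
    rw [← Finset.sum_smul, ← Finset.sum_mul, ← Finset.sum_div, ← Finset.sum_mul]
    congr 1
    ring

section Channels

variable {n : Type*} [Fintype n] [DecidableEq n]

lemma posPartTrace_sum_sub_smul_le {ι : Type*} [Fintype ι] {S : ι → Matrix n n ℂ}
    (hS : ∀ k, (S k).PosSemidef) {a b : ι → ℝ} (ha : ∀ k, 0 ≤ a k) (hb : ∀ k, 0 ≤ b k)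
    (hab : ∀ k, a k * b k = 0) {γ M : ℝ} (hγ : γ * ∑ k, a k ≤ ∑ k, b k) (hq : 0 < ∑ k, b k)
    (hM : ∀ k l, k ≠ l → posPartTrace (S k - γ • S l) ≤ M) :
    posPartTrace (∑ k, (a k - b k) • S k) ≤ (∑ k, a k) * M := by
  have hmix := sum_smul_sub_smul_sum_eq_sum_prod a b hq.ne' γ S
  set p := ∑ k, a k
  set q := ∑ k, b k
  have hSH k := (hS k).isHermitian
  have hdom : (∑ k, a k • S k - (γ * p / q) • ∑ k, b k • S k) - ∑ k, (a k - b k) • S k =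
      (1 - γ * p / q) • ∑ k, b k • S k := by
    simp only [sub_smul, Finset.sum_sub_distrib, one_smul]
    abel
  have hw : ∀ k l, 0 ≤ a k * b l / q := fun k l => div_nonneg (mul_nonneg (ha k) (hb l)) hq.le
  have hcoef : 0 ≤ 1 - γ * p / q := sub_nonneg.mpr ((div_le_one hq).mpr hγ)
  have hmixH : ∀ kl : ι × ι, (S kl.1 - γ • S kl.2).IsHermitian :=
    fun kl => (hSH kl.1).sub ((hSH kl.2).smul (.all γ))
  calc posPartTrace (∑ k, (a k - b k) • S k)
      ≤ posPartTrace (∑ k, a k • S k - (γ * p / q) • ∑ k, b k • S k) := by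
        refine posPartTrace_mono (isHermitian_sum_smul _ hSH) ?_ ?_
        · rw [hmix]; exact isHermitian_sum_smul _ hmixH
        · rw [hdom]
          exact (posSemidef_sum _ fun k _ => (hS k).smul (hb k)).smul hcoef
    _ ≤ ∑ kl : ι × ι, a kl.1 * b kl.2 / q * posPartTrace (S kl.1 - γ • S kl.2) := by
        rw [hmix]
        exact posPartTrace_sum_smul_le (c := fun kl : ι × ι => a kl.1 * b kl.2 / q)
          (X := fun kl => S kl.1 - γ • S kl.2) (fun kl => hw kl.1 kl.2) hmixH
    _ ≤ ∑ kl : ι × ι, a kl.1 * b kl.2 / q * M := by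
        refine Finset.sum_le_sum fun ⟨k, l⟩ _ => ?_
        obtain rfl | hkl := eq_or_ne k l
        · simp [hab]
        · exact mul_le_mul_of_nonneg_left (hM k l hkl) (hw k l)
    _ = p * M := by
        simp only [Fintype.sum_prod_type, ← Finset.sum_mul, ← Finset.sum_div, ← Finset.mul_sum]
        rw [mul_div_assoc, div_self hq.ne', mul_one]

lemma IsCPTP.posSemidef_map {m : Type*} [Fintype m] [DecidableEq m]
    {Φ : Matrix n n ℂ →ₗ[ℂ] Matrix m m ℂ} (hΦ : IsCPTP Φ) {ρ : Matrix n n ℂ}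
    (hρ : ρ.PosSemidef) : (Φ ρ).PosSemidef :=
  (hΦ.1 1 (ρ.submatrix Prod.snd Prod.snd) (hρ.submatrix Prod.snd)).submatrix fun i => (0, i)

lemma IsCPTP.isDensity_map {m : Type*} [Fintype m] [DecidableEq m]
    {Φ : Matrix n n ℂ →ₗ[ℂ] Matrix m m ℂ} (hΦ : IsCPTP Φ) {ρ : Matrix n n ℂ}
    (hρ : IsDensity ρ) : IsDensity (Φ ρ) :=
  ⟨hΦ.posSemidef_map hρ.1, (hΦ.2 ρ).trans hρ.2⟩

lemma hsDiv_map_le_mul {Φ : Matrix n n ℂ →ₗ[ℂ] Matrix n n ℂ} (hΦ : IsCPTP Φ) {γ : ℝ}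
    (hγ : 1 ≤ γ) {ρ σ : Matrix n n ℂ} (hρ : IsDensity ρ) (hσ : IsDensity σ)
    (hpos : 0 < hsDiv γ ρ σ) {M : ℝ}
    (hM : ∀ φ ψ : n → ℂ, star φ ⬝ᵥ φ = 1 → star ψ ⬝ᵥ ψ = 1 → star φ ⬝ᵥ ψ = 0 →
      hsDiv γ (Φ (vecMulVec φ (star φ))) (Φ (vecMulVec ψ (star ψ))) ≤ M) :
    hsDiv γ (Φ ρ) (Φ σ) ≤ hsDiv γ ρ σ * M := by
  have hΔ : (ρ - γ • σ).IsHermitian := hρ.1.isHermitian.sub (hσ.1.isHermitian.smul (.all γ))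
  set μ := hΔ.eigenvalues
  set e := fun k => ⇑(hΔ.eigenvectorBasis k)
  set a := fun k => max (μ k) 0
  set b := fun k => max (-μ k) 0
  have hp : ∑ k, a k = hsDiv γ ρ σ := by
    rw [hsDiv_eq_posPartTrace, posPartTrace_of_isHermitian hΔ]
  have hpq : ∑ k, a k - ∑ k, b k = 1 - γ := by
    rw [← Finset.sum_sub_distrib]
    simp only [a, b, max_zero_sub_max_neg_zero_eq_self]
    rw [← hΔ.re_trace_eq_sum_eigenvalues]
    simp [trace_sub, trace_smul, hρ.2, hσ.2]
  have hp₁ : ∑ k, a k ≤ 1 := hp ▸ hsDiv_le_one hρ hσ.1 (by linarith)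
  have hγq : γ * ∑ k, a k ≤ ∑ k, b k := by
    nlinarith [mul_nonneg (sub_nonneg.2 hγ) (sub_nonneg.2 hp₁)]
  have hq : 0 < ∑ k, b k := by nlinarith
  have hab : ∀ k, a k * b k = 0 := fun k => by
    rcases le_total (μ k) 0 with h | h <;> simp [a, b, h]
  have horth : ∀ k l, star (e k) ⬝ᵥ e l = if k = l then 1 else 0 :=
    hΔ.star_eigenvectorBasis_dotProduct
  have hΦΔ : Φ ρ - γ • Φ σ = ∑ k, (a k - b k) • Φ (vecMulVec (e k) (star (e k))) := by
    rw [← LinearMap.map_smul_of_tower, ← map_sub, hΔ.eq_sum_eigenvalues_smul_vecMulVec, map_sum]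
    refine Finset.sum_congr rfl fun k _ => ?_
    rw [LinearMap.map_smul_of_tower, max_zero_sub_max_neg_zero_eq_self]
  rw [hsDiv_eq_posPartTrace, hΦΔ, ← hp]
  refine posPartTrace_sum_sub_smul_le (fun k => hΦ.posSemidef_map
    (posSemidef_vecMulVec_self_star _)) (fun k => le_max_right _ _) (fun k => le_max_right _ _)
    hab hγq hq fun k l hkl => ?_
  rw [← hsDiv_eq_posPartTrace]
  exact hM _ _ (by simpa using horth k k) (by simpa using horth l l)
    (by simpa [hkl] using horth k l)

end Channels

lemma csSup_eq_csSup_of_subset_of_forall_le {α : Type*} [ConditionallyCompleteLattice α]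
    {s t : Set α} (hs : s.Nonempty) (hst : s ⊆ t) (ht : ∀ x ∈ t, x ≤ sSup s) :
    sSup t = sSup s :=
  le_antisymm (csSup_le (hs.mono hst) ht) (csSup_le_csSup ⟨_, ht⟩ hs hst)

/-- The hockey-stick contraction coefficient is attained on orthogonal pure states. -/
theorem contractionCoeff_eq_sup_orthogonal_pure {d : ℕ} (hd : 2 ≤ d)
    (Φ : Matrix (Fin d) (Fin d) ℂ →ₗ[ℂ] Matrix (Fin d) (Fin d) ℂ) (hΦ : IsCPTP Φ)
    (γ : ℝ) (hγ : 1 ≤ γ) :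
    contractionCoeff γ Φ =
      sSup {x : ℝ | ∃ φ ψ : Fin d → ℂ,
        (∑ i, ‖φ i‖ ^ 2 = 1) ∧ (∑ i, ‖ψ i‖ ^ 2 = 1) ∧ (∑ i, star (φ i) * ψ i = 0) ∧
        x = hsDiv γ (Φ (Matrix.of fun i j => φ i * star (φ j)))
                  (Φ (Matrix.of fun i j => ψ i * star (ψ j)))} := by
  have hunit := star_dotProduct_self_eq_one_iff (n := Fin d)
  rw [contractionCoeff]
  refine csSup_eq_csSup_of_subset_of_forall_le ?_ ?_ ?_
  · exact ⟨_, Pi.single ⟨0, by omega⟩ 1, Pi.single ⟨1, by omega⟩ 1,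
      by simp [Pi.single_apply, apply_ite], by simp [Pi.single_apply, apply_ite],
      by simp [Pi.single_apply], rfl⟩
  · rintro _ ⟨φ, ψ, hφ, hψ, hφψ, rfl⟩
    have h₁ := hsDiv_vecMulVec_eq_one (γ := γ) (by linarith) ((hunit φ).2 hφ) hφψ
    exact ⟨_, _, isDensity_vecMulVec ((hunit φ).2 hφ), isDensity_vecMulVec ((hunit ψ).2 hψ),
      h₁ ▸ one_pos, by rw [h₁, div_one]; rfl⟩
  · rintro _ ⟨ρ, σ, hρ, hσ, hpos, rfl⟩
    rw [div_le_iff₀ hpos, mul_comm]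
    refine hsDiv_map_le_mul hΦ hγ hρ hσ hpos fun φ ψ hφ hψ hφψ =>
      le_csSup ⟨1, ?_⟩ ⟨φ, ψ, (hunit φ).1 hφ, (hunit ψ).1 hψ, hφψ, rfl⟩
    rintro _ ⟨φ', ψ', hφ', -, -, rfl⟩
    exact hsDiv_le_one (hΦ.isDensity_map (isDensity_vecMulVec ((hunit φ').2 hφ')))
      (hΦ.posSemidef_map (posSemidef_vecMulVec_self_star ψ')) (by linarith)
end

section
/- A Fuchs–van-de-Graaf type inequality for the hockey-stick divergence: for any density operators ρ, σ on a finite-dimensional complex Hilbert space and any γ ≥ 1, E_γ(ρ‖σ) ≤ (1/2)·√((1+γ)² − 4γ·F(ρ,σ)) + (1−γ)/2, where F(ρ,σ) = ‖√ρ·√σ‖₁² is the quantum fidelity. -/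
open scoped BigOperators ComplexOrder

/-- The positive semidefinite square root (definition of `Matrix.PosSemidef.sqrt` from the
older Mathlib, which has since been removed). -/
noncomputable def Matrix.PosSemidef.sqrt {n : Type*} [Fintype n] [DecidableEq n]
    {A : Matrix n n ℂ} (hA : A.PosSemidef) : Matrix n n ℂ :=
  hA.1.eigenvectorUnitary.1 * Matrix.diagonal ((↑) ∘ (√·) ∘ hA.1.eigenvalues) *
  (star hA.1.eigenvectorUnitary : Matrix n n ℂ)

/-!
Write `ρ - γσ = AAᴴ - BBᴴ` with `A = √ρ` and `B = √γ √σ W`, where `W` is the unitary of a polar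
decomposition of `√ρ √σ`, so that `Tr (Aᴴ B) = √γ ‖√ρ √σ‖₁`. For a unit eigenvector `v` of
`AAᴴ - BBᴴ` the eigenvalue is `‖Aᴴv‖² - ‖Bᴴv‖²`, whose modulus is at most `‖(A-B)ᴴv‖ ‖(A+B)ᴴv‖`.
Summing over an eigenbasis and applying Cauchy–Schwarz bounds `‖ρ - γσ‖₁` by
`‖A - B‖₂ ‖A + B‖₂ = √((1 + γ)² - 4γ F(ρ,σ))`, and `E_γ(ρ‖σ) = (‖ρ - γσ‖₁ + Tr (ρ - γσ)) / 2`.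
-/

open Matrix WithLp
open scoped InnerProductSpace MatrixOrder

namespace Matrix.PosSemidef
variable {n : Type*} [Fintype n] [DecidableEq n] {A : Matrix n n ℂ}

lemma sqrt_eq_cfcSqrt (hA : A.PosSemidef) : hA.sqrt = CFC.sqrt A := by
  rw [CFC.sqrt_eq_real_sqrt A hA.nonneg, cfcₙ_eq_cfc, hA.1.cfc_eq]
  rfl

lemma sqrt_mul_sqrt (hA : A.PosSemidef) : hA.sqrt * hA.sqrt = A := by
  rw [sqrt_eq_cfcSqrt, CFC.sqrt_mul_sqrt_self A hA.nonneg]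

lemma conjTranspose_sqrt (hA : A.PosSemidef) : hA.sqrtᴴ = hA.sqrt := by
  rw [sqrt_eq_cfcSqrt]
  exact (CFC.sqrt_nonneg A).isSelfAdjoint

end Matrix.PosSemidef

lemma abs_norm_sq_sub_norm_sq_le {F : Type*} [NormedAddCommGroup F] [InnerProductSpace ℝ F]
    (x y : F) : |‖x‖ ^ 2 - ‖y‖ ^ 2| ≤ ‖x - y‖ * ‖x + y‖ := by
  have h : ‖x‖ ^ 2 - ‖y‖ ^ 2 = ⟪x - y, x + y⟫_ℝ := by
    rw [inner_sub_left, inner_add_right, inner_add_right, real_inner_comm x y,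
      real_inner_self_eq_norm_sq, real_inner_self_eq_norm_sq]
    ring
  rw [h]
  exact abs_real_inner_le_norm _ _

theorem exists_orthonormalBasis_inner_eq_norm {𝕜 E ι : Type*} [RCLike 𝕜] [NormedAddCommGroup E]
    [InnerProductSpace 𝕜 E] [FiniteDimensional 𝕜 E] [Fintype ι]
    (hcard : Module.finrank 𝕜 E = Fintype.card ι) {y : ι → E}
    (hy : Pairwise fun i j => ⟪y i, y j⟫_𝕜 = 0) :
    ∃ b : OrthonormalBasis ι 𝕜 E, ∀ i, ⟪b i, y i⟫_𝕜 = ‖y i‖ := by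
  set s : Set ι := {i | y i ≠ 0}
  have hs : Orthonormal 𝕜 (s.domRestrict fun i => (‖y i‖⁻¹ : 𝕜) • y i) := by
    refine ⟨fun i => ?_, fun i j hij => ?_⟩
    · simpa [Set.domRestrict_apply, norm_smul] using inv_mul_cancel₀ (norm_ne_zero_iff.mpr i.2)
    · simp [Set.domRestrict_apply, inner_smul_left, inner_smul_right,
        hy (Subtype.coe_ne_coe.mpr hij)]
  obtain ⟨b, hb⟩ := hs.exists_orthonormalBasis_extension_of_card_eq hcard
  refine ⟨b, fun i => ?_⟩
  by_cases hi : y i = 0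
  · simp [hi]
  · rw [hb i hi, inner_smul_left, inner_self_eq_norm_sq_to_K, map_inv₀, RCLike.conj_ofReal, sq,
      inv_mul_cancel_left₀ (by simpa using hi)]

namespace Matrix

section
variable {𝕜 : Type*} [RCLike 𝕜] {m n ι : Type*} [Fintype m] [Fintype n] [Fintype ι]

lemma inner_toLp_mulVec_toLp_mulVec (X : Matrix m n 𝕜) (v w : n → 𝕜) :
    ⟪toLp 2 (X *ᵥ v), toLp 2 (X *ᵥ w)⟫_𝕜 = star v ⬝ᵥ (Xᴴ * X) *ᵥ w := by
  rw [EuclideanSpace.inner_toLp_toLp, dotProduct_comm, star_mulVec, dotProduct_mulVec,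
    dotProduct_mulVec, vecMul_vecMul]

lemma trace_eq_sum_star_dotProduct_mulVec [DecidableEq n] (Y : Matrix n n 𝕜)
    (b : OrthonormalBasis ι 𝕜 (EuclideanSpace 𝕜 n)) :
    Y.trace = ∑ i, star ⇑(b i) ⬝ᵥ Y *ᵥ ⇑(b i) := by
  rw [← trace_toLin_eq Y (PiLp.basisFun 2 𝕜 n), ← toLpLin_eq_toLin,
    LinearMap.trace_eq_sum_inner _ b]
  refine Finset.sum_congr rfl fun i _ => ?_
  rw [toLpLin_apply, EuclideanSpace.inner_eq_star_dotProduct, dotProduct_comm]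

lemma re_trace_conjTranspose_mul_comm (A B : Matrix n m 𝕜) :
    RCLike.re (Bᴴ * A).trace = RCLike.re (Aᴴ * B).trace := by
  rw [← conjTranspose_conjTranspose A, ← conjTranspose_mul, trace_conjTranspose,
    conjTranspose_conjTranspose, RCLike.star_def, RCLike.conj_re]

lemma re_trace_conjTranspose_add_mul_add (A B : Matrix n m 𝕜) :
    RCLike.re ((A + B)ᴴ * (A + B)).trace = RCLike.re (Aᴴ * A).trace + RCLike.re (Bᴴ * B).trace
      + 2 * RCLike.re (Aᴴ * B).trace := by
  simp only [conjTranspose_add, Matrix.add_mul, Matrix.mul_add, trace_add, map_add,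
    re_trace_conjTranspose_mul_comm A B]
  ring

lemma re_trace_conjTranspose_sub_mul_sub (A B : Matrix n m 𝕜) :
    RCLike.re ((A - B)ᴴ * (A - B)).trace = RCLike.re (Aᴴ * A).trace + RCLike.re (Bᴴ * B).trace
      - 2 * RCLike.re (Aᴴ * B).trace := by
  simp only [conjTranspose_sub, Matrix.sub_mul, Matrix.mul_sub, trace_sub, map_sub,
    re_trace_conjTranspose_mul_comm A B]
  ring

variable [DecidableEq n]

theorem sum_abs_eigenvalues_le_sqrt_mul_sqrt {M : Matrix n n 𝕜} (hM : M.IsHermitian)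
    (A B : Matrix n m 𝕜) (hMAB : M = A * Aᴴ - B * Bᴴ) :
    ∑ i, |hM.eigenvalues i| ≤
      √(RCLike.re ((A - B)ᴴ * (A - B)).trace) * √(RCLike.re ((A + B)ᴴ * (A + B)).trace) := by
  subst hMAB
  let := InnerProductSpace.rclikeToReal 𝕜 (EuclideanSpace 𝕜 m)
  set v := hM.eigenvectorBasis
  have hnorm : ∀ (X : Matrix n m 𝕜) i,
      ‖toLp 2 (Xᴴ *ᵥ ⇑(v i))‖ ^ 2 = RCLike.re (star ⇑(v i) ⬝ᵥ (X * Xᴴ) *ᵥ ⇑(v i)) := by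
    intro X i
    rw [← inner_self_eq_norm_sq (𝕜 := 𝕜), inner_toLp_mulVec_toLp_mulVec,
      conjTranspose_conjTranspose]
  have hsum : ∀ X : Matrix n m 𝕜,
      ∑ i, ‖toLp 2 (Xᴴ *ᵥ ⇑(v i))‖ ^ 2 = RCLike.re (Xᴴ * X).trace := by
    intro X
    rw [trace_mul_comm, trace_eq_sum_star_dotProduct_mulVec _ v, map_sum]
    exact Finset.sum_congr rfl fun i _ => hnorm X i
  have heig : ∀ i, hM.eigenvalues i =
      ‖toLp 2 (Aᴴ *ᵥ ⇑(v i))‖ ^ 2 - ‖toLp 2 (Bᴴ *ᵥ ⇑(v i))‖ ^ 2 := by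
    intro i
    rw [hM.eigenvalues_eq, hnorm, hnorm, ← map_sub, ← dotProduct_sub, ← sub_mulVec]
  calc ∑ i, |hM.eigenvalues i|
      ≤ ∑ i, ‖toLp 2 ((A - B)ᴴ *ᵥ ⇑(v i))‖ * ‖toLp 2 ((A + B)ᴴ *ᵥ ⇑(v i))‖ := by
        refine Finset.sum_le_sum fun i _ => ?_
        rw [heig, conjTranspose_sub, conjTranspose_add, sub_mulVec, add_mulVec, toLp_sub,
          toLp_add]
        exact abs_norm_sq_sub_norm_sq_le _ _
    _ ≤ _ := by
        rw [← hsum, ← hsum]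
        exact Real.sum_mul_le_sqrt_mul_sqrt _ _ _

theorem sum_abs_eigenvalues_le {M : Matrix n n 𝕜} (hM : M.IsHermitian)
    (A B : Matrix n m 𝕜) (hMAB : M = A * Aᴴ - B * Bᴴ) :
    ∑ i, |hM.eigenvalues i| ≤ √((RCLike.re (Aᴴ * A).trace + RCLike.re (Bᴴ * B).trace) ^ 2
      - 4 * RCLike.re (Aᴴ * B).trace ^ 2) := by
  have hnonneg : 0 ≤ RCLike.re ((A - B)ᴴ * (A - B)).trace :=
    (RCLike.nonneg_iff.mp (posSemidef_conjTranspose_mul_self _).trace_nonneg).1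
  refine (sum_abs_eigenvalues_le_sqrt_mul_sqrt hM A B hMAB).trans_eq ?_
  rw [← Real.sqrt_mul hnonneg, re_trace_conjTranspose_sub_mul_sub,
    re_trace_conjTranspose_add_mul_add]
  ring_nf

end

section
variable {n : Type*} [Fintype n] [DecidableEq n]

theorem exists_mem_unitaryGroup_trace_mul_eq_traceNorm (X : Matrix n n ℂ) :
    ∃ W ∈ unitaryGroup n ℂ, (X * W).trace = traceNorm X := by
  set hH := (posSemidef_conjTranspose_mul_self X).isHermitian
  set v := hH.eigenvectorBasis
  set y : n → EuclideanSpace ℂ n := fun i => toLp 2 (X *ᵥ ⇑(v i))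
  have hy : ∀ i j, ⟪y i, y j⟫_ℂ = hH.eigenvalues j * ⟪v i, v j⟫_ℂ := by
    intro i j
    rw [inner_toLp_mulVec_toLp_mulVec, hH.mulVec_eigenvectorBasis, dotProduct_smul,
      EuclideanSpace.inner_eq_star_dotProduct, dotProduct_comm, Complex.real_smul]
  have horth : Pairwise fun i j => ⟪y i, y j⟫_ℂ = 0 := fun i j hij => by
    simp only [hy, v.orthonormal.2 hij, mul_zero]
  have hnorm : ∀ i, ‖y i‖ = √(hH.eigenvalues i) := by
    intro i
    rw [norm_eq_sqrt_re_inner (𝕜 := ℂ), hy, inner_self_eq_norm_sq_to_K, v.orthonormal.1 i]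
    simp
  -- `W = V Qᴴ`, where `V` diagonalises `XᴴX` and the columns of `Q` complete the normalised
  -- vectors `X vᵢ` to an orthonormal basis: this is the polar decomposition of `X`.
  obtain ⟨b, hb⟩ := exists_orthonormalBasis_inner_eq_norm (by simp) horth
  set Q := (EuclideanSpace.basisFun n ℂ).toBasis.toMatrix b
  refine ⟨hH.eigenvectorUnitary * star Q, mul_mem (SetLike.coe_mem _)
    (Unitary.star_mem (OrthonormalBasis.toMatrix_orthonormalBasis_mem_unitary _ _)), ?_⟩
  rw [← mul_assoc, trace_mul_comm, trace, traceNorm, Complex.ofReal_sum]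
  refine Finset.sum_congr rfl fun i _ => ?_
  calc (star Q * (X * hH.eigenvectorUnitary)) i i = ⟪b i, y i⟫_ℂ := by
        simp [mul_apply, Q, y, v, PiLp.inner_apply, mulVec, dotProduct, Finset.mul_sum,
          Module.Basis.toMatrix_apply, mul_comm]
    _ = √(hH.eigenvalues i) := by rw [hb, hnorm]; rfl

lemma IsHermitian.posPartTrace_eq {M : Matrix n n ℂ} (hM : M.IsHermitian) :
    posPartTrace M = (∑ i, |hM.eigenvalues i| + M.trace.re) / 2 := by
  rw [posPartTrace, dif_pos hM, hM.trace_eq_sum_eigenvalues, Complex.re_sum,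
    ← Finset.sum_add_distrib, Finset.sum_div]
  refine Finset.sum_congr rfl fun i _ => ?_
  rcases le_total 0 (hM.eigenvalues i) with h | h
  · simp [h, abs_of_nonneg h]
  · simp [h, abs_of_nonpos h]

end

end Matrix

theorem sum_abs_eigenvalues_sub_smul_le {n : Type*} [Fintype n] [DecidableEq n]
    {ρ σ : Matrix n n ℂ} (hρ : IsDensity ρ) (hσ : IsDensity σ) {γ : ℝ} (hγ : 0 ≤ γ)
    (hM : (ρ - (γ : ℂ) • σ).IsHermitian) :
    ∑ i, |hM.eigenvalues i| ≤
      √((1 + γ) ^ 2 - 4 * γ * traceNorm (hρ.1.sqrt * hσ.1.sqrt) ^ 2) := by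
  obtain ⟨W, hW, htrace⟩ :=
    exists_mem_unitaryGroup_trace_mul_eq_traceNorm (hρ.1.sqrt * hσ.1.sqrt)
  set A := hρ.1.sqrt
  set B := ((√γ : ℝ) : ℂ) • (hσ.1.sqrt * W)
  have hA : A * Aᴴ = ρ := by rw [hρ.1.conjTranspose_sqrt, hρ.1.sqrt_mul_sqrt]
  have hB : B * Bᴴ = (γ : ℂ) • σ := by
    rw [conjTranspose_smul, conjTranspose_mul, hσ.1.conjTranspose_sqrt, Matrix.smul_mul,
      Matrix.mul_smul, smul_smul, Matrix.mul_assoc, ← Matrix.mul_assoc W, ← star_eq_conjTranspose,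
      mem_unitaryGroup_iff.mp hW, Matrix.one_mul, hσ.1.sqrt_mul_sqrt]
    congr 1
    rw [Complex.star_def, Complex.conj_ofReal, ← Complex.ofReal_mul, Real.mul_self_sqrt hγ]
  have hAA : (Aᴴ * A).trace.re = 1 := by rw [trace_mul_comm, hA, hρ.2, Complex.one_re]
  have hBB : (Bᴴ * B).trace.re = γ := by
    rw [trace_mul_comm, hB, trace_smul, hσ.2, smul_eq_mul, mul_one, Complex.ofReal_re]
  have hAB : (Aᴴ * B).trace.re = √γ * traceNorm (A * hσ.1.sqrt) := by
    rw [hρ.1.conjTranspose_sqrt, Matrix.mul_smul, trace_smul, ← Matrix.mul_assoc, htrace,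
      smul_eq_mul, ← Complex.ofReal_mul, Complex.ofReal_re]
  have hbound := sum_abs_eigenvalues_le hM A B (by rw [hA, hB])
  simp only [RCLike.re_to_complex, hAA, hBB, hAB] at hbound
  convert hbound using 2
  rw [mul_pow, Real.sq_sqrt hγ]
  ring

/-- Fuchs–van-de-Graaf type inequality for the hockey-stick divergence, where the
fidelity is `F(ρ,σ) = ‖√ρ √σ‖₁²`. -/
theorem hsDiv_le_fvdg {d : ℕ} (ρ σ : Matrix (Fin d) (Fin d) ℂ)
    (hρ : IsDensity ρ) (hσ : IsDensity σ) (γ : ℝ) (hγ : 1 ≤ γ) :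
    hsDiv γ ρ σ ≤
      (1 / 2) * Real.sqrt ((1 + γ) ^ 2 - 4 * γ * (traceNorm (hρ.1.sqrt * hσ.1.sqrt)) ^ 2)
        + (1 - γ) / 2 := by
  have hM : (ρ - (γ : ℂ) • σ).IsHermitian := hρ.1.1.sub (hσ.1.1.smul (Complex.conj_ofReal γ))
  have htrace : (ρ - (γ : ℂ) • σ).trace.re = 1 - γ := by
    simp [trace_sub, trace_smul, hρ.2, hσ.2]
  have hbound := sum_abs_eigenvalues_sub_smul_le hρ hσ (by linarith) hM
  rw [hsDiv, hM.posPartTrace_eq, htrace]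
  linarith
end

section
/- Triangle-type inequality for the hockey-stick divergence: for any density operators ρ, σ, τ on a finite-dimensional complex Hilbert space and any γ₁, γ₂ ≥ 1, E_{γ₁γ₂}(ρ‖σ) ≤ E_{γ₁}(ρ‖τ) + γ₁·E_{γ₂}(τ‖σ). -/
open scoped BigOperators ComplexOrder

/-! For Hermitian `X`, `Tr X₊` is the maximum of `Tr (P X)` over `0 ≤ P ≤ 1`: in an eigenbasis
of `X` one has `Tr (P X) = ∑ Pᵢᵢ λᵢ` with `Pᵢᵢ ∈ [0, 1]`, and the spectral projection onto the
nonnegative eigenvalues attains `∑ max λᵢ 0`. Hence `X ↦ Tr X₊` is subadditive and positively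
subhomogeneous, and the inequality follows by applying this to
`ρ - γ₁γ₂σ = (ρ - γ₁τ) + γ₁(τ - γ₂σ)`. -/

lemma Complex.mul_ofReal_le_max {z : ℂ} (h0 : 0 ≤ z) (h1 : z ≤ 1) (x : ℝ) :
    z * x ≤ (max x 0 : ℝ) := by
  obtain ⟨hre0, him⟩ := Complex.nonneg_iff.mp h0
  rw [Complex.le_def] at h1 ⊢
  simp only [Complex.one_re, Complex.mul_re, Complex.mul_im, Complex.ofReal_re,
    Complex.ofReal_im] at h1 ⊢
  refine ⟨?_, by rw [← him]; ring⟩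
  rcases le_total 0 x with hx | hx
  · nlinarith [le_max_left x 0]
  · nlinarith [le_max_right x 0]

namespace Matrix

variable {n : Type*} [Fintype n] [DecidableEq n]

lemma IsHermitian.trace_mul_eq_sum {X : Matrix n n ℂ} (hX : X.IsHermitian) (M : Matrix n n ℂ) :
    (M * X).trace = ∑ i,
      (star (hX.eigenvectorUnitary : Matrix n n ℂ) * M * hX.eigenvectorUnitary) i i *
        hX.eigenvalues i := by
  conv_lhs => rw [hX.spectral_theorem]
  rw [Unitary.conjStarAlgAut_apply, ← mul_assoc, ← mul_assoc, trace_mul_cycle, ← mul_assoc]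
  simp [trace, mul_diagonal]

lemma PosSemidef.diag_conj_mem_Icc {M : Matrix n n ℂ} (hM : M.PosSemidef)
    (hM1 : (1 - M).PosSemidef) {U : Matrix n n ℂ} (hU : U ∈ unitaryGroup n ℂ) (i : n) :
    0 ≤ (star U * M * U) i i ∧ (star U * M * U) i i ≤ 1 := by
  have h1 := (hM1.conjTranspose_mul_mul_same U).diag_nonneg (i := i)
  rw [mul_sub, sub_mul, mul_one, ← star_eq_conjTranspose, Unitary.star_mul_self_of_mem hU] at h1
  refine ⟨(hM.conjTranspose_mul_mul_same U).diag_nonneg, ?_⟩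
  simpa using h1

lemma IsHermitian.posPartTrace_eq_s4 {X : Matrix n n ℂ} (hX : X.IsHermitian) :
    (posPartTrace X : ℂ) = ∑ i, ((max (hX.eigenvalues i) 0 : ℝ) : ℂ) := by
  rw [posPartTrace, dif_pos hX, Complex.ofReal_sum]

lemma IsHermitian.trace_mul_le_posPartTrace {X M : Matrix n n ℂ} (hX : X.IsHermitian)
    (hM : M.PosSemidef) (hM1 : (1 - M).PosSemidef) :
    (M * X).trace ≤ posPartTrace X := by
  rw [hX.trace_mul_eq_sum, hX.posPartTrace_eq_s4]
  refine Finset.sum_le_sum fun i _ => ?_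
  obtain ⟨h0, h1⟩ := hM.diag_conj_mem_Icc hM1 hX.eigenvectorUnitary.2 i
  exact Complex.mul_ofReal_le_max h0 h1 _

lemma IsHermitian.exists_trace_mul_eq_posPartTrace {X : Matrix n n ℂ} (hX : X.IsHermitian) :
    ∃ P : Matrix n n ℂ, P.PosSemidef ∧ (1 - P).PosSemidef ∧
      (P * X).trace = posPartTrace X := by
  let U : Matrix n n ℂ := hX.eigenvectorUnitary
  have hU : U ∈ unitaryGroup n ℂ := hX.eigenvectorUnitary.2
  let proj (p : n → Prop) [DecidablePred p] : Matrix n n ℂ :=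
    U * diagonal (fun i => if p i then 1 else 0) * star U
  have proj_psd (p : n → Prop) [DecidablePred p] : (proj p).PosSemidef := by
    refine (PosSemidef.diagonal fun i => ?_).mul_mul_conjTranspose_same U
    split_ifs <;> simp
  have proj_conj (p : n → Prop) [DecidablePred p] :
      star U * proj p * U = diagonal fun i => if p i then 1 else 0 := by
    simp only [proj, ← mul_assoc, Unitary.star_mul_self_of_mem hU, one_mul]
    rw [mul_assoc, Unitary.star_mul_self_of_mem hU, mul_one]
  refine ⟨proj fun i => 0 ≤ hX.eigenvalues i, proj_psd _, ?_, ?_⟩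
  · convert proj_psd fun i => ¬ 0 ≤ hX.eigenvalues i using 1
    rw [sub_eq_iff_eq_add', ← add_mul, ← mul_add, diagonal_add]
    simp only [ite_not, ite_add_ite, add_zero, zero_add, ite_self, diagonal_one, mul_one]
    exact (Unitary.mul_star_self_of_mem hU).symm
  · rw [hX.trace_mul_eq_sum, hX.posPartTrace_eq_s4, proj_conj]
    refine Finset.sum_congr rfl fun i _ => ?_
    rw [diagonal_apply_eq]
    split_ifs with h
    · simp [max_eq_left h]
    · simp [max_eq_right (le_of_not_ge h)]

end Matrix

section PosPartTrace

variable {n : Type*} [Fintype n] [DecidableEq n]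

lemma posPartTrace_add_le {A B : Matrix n n ℂ} (hA : A.IsHermitian) (hB : B.IsHermitian) :
    posPartTrace (A + B) ≤ posPartTrace A + posPartTrace B := by
  obtain ⟨P, hP, hP1, hPAB⟩ := (hA.add hB).exists_trace_mul_eq_posPartTrace
  have key : (posPartTrace (A + B) : ℂ) ≤ (posPartTrace A : ℂ) + posPartTrace B := by
    rw [← hPAB, Matrix.mul_add, Matrix.trace_add]
    exact add_le_add (hA.trace_mul_le_posPartTrace hP hP1) (hB.trace_mul_le_posPartTrace hP hP1)
  exact_mod_cast key

lemma posPartTrace_ofReal_smul_le {B : Matrix n n ℂ} (hB : B.IsHermitian) {c : ℝ} (hc : 0 ≤ c) :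
    posPartTrace ((c : ℂ) • B) ≤ c * posPartTrace B := by
  obtain ⟨P, hP, hP1, hPcB⟩ :=
    (hB.smul (Complex.conj_ofReal c)).exists_trace_mul_eq_posPartTrace
  have key : (posPartTrace ((c : ℂ) • B) : ℂ) ≤ c * posPartTrace B := by
    rw [← hPcB, Matrix.mul_smul, Matrix.trace_smul, smul_eq_mul]
    exact mul_le_mul_of_nonneg_left (hB.trace_mul_le_posPartTrace hP hP1)
      (Complex.zero_le_real.mpr hc)
  exact_mod_cast key

end PosPartTrace

theorem hsDiv_triangle_general {d : ℕ} (ρ σ τ : Matrix (Fin d) (Fin d) ℂ)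
    (hρ : IsDensity ρ) (hσ : IsDensity σ) (hτ : IsDensity τ)
    (γ₁ γ₂ : ℝ) (hγ₁ : 1 ≤ γ₁) :
    hsDiv (γ₁ * γ₂) ρ σ ≤ hsDiv γ₁ ρ τ + γ₁ * hsDiv γ₂ τ σ := by
  have hρτ : (ρ - (γ₁ : ℂ) • τ).IsHermitian := hρ.1.1.sub (hτ.1.1.smul (Complex.conj_ofReal γ₁))
  have hτσ : (τ - (γ₂ : ℂ) • σ).IsHermitian := hτ.1.1.sub (hσ.1.1.smul (Complex.conj_ofReal γ₂))
  have split : ρ - ((γ₁ * γ₂ : ℝ) : ℂ) • σ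
      = (ρ - (γ₁ : ℂ) • τ) + (γ₁ : ℂ) • (τ - (γ₂ : ℂ) • σ) := by
    rw [Complex.ofReal_mul, smul_sub, smul_smul]
    abel
  calc hsDiv (γ₁ * γ₂) ρ σ
      ≤ posPartTrace (ρ - (γ₁ : ℂ) • τ) + posPartTrace ((γ₁ : ℂ) • (τ - (γ₂ : ℂ) • σ)) := by
        rw [hsDiv, split]
        exact posPartTrace_add_le hρτ (hτσ.smul (Complex.conj_ofReal γ₁))
    _ ≤ hsDiv γ₁ ρ τ + γ₁ * hsDiv γ₂ τ σ :=
        add_le_add_right (posPartTrace_ofReal_smul_le hτσ (zero_le_one.trans hγ₁)) _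

/-- Triangle-type inequality for the hockey-stick divergence. -/
theorem hsDiv_triangle {d : ℕ} (ρ σ τ : Matrix (Fin d) (Fin d) ℂ)
    (hρ : IsDensity ρ) (hσ : IsDensity σ) (hτ : IsDensity τ)
    (γ₁ γ₂ : ℝ) (hγ₁ : 1 ≤ γ₁) (hγ₂ : 1 ≤ γ₂) :
    hsDiv (γ₁ * γ₂) ρ σ ≤ hsDiv γ₁ ρ τ + γ₁ * hsDiv γ₂ τ σ :=
  hsDiv_triangle_general ρ σ τ hρ hσ hτ γ₁ γ₂ hγ₁
end

section
/- Subadditivity of the hockey-stick divergence under tensor products: for any density operators ρ₁, σ₁ on one finite-dimensional system and ρ₂, σ₂ on another, and any γ₁, γ₂ ≥ 1, both E_{γ₁γ₂}(ρ₁⊗ρ₂ ‖ σ₁⊗σ₂) ≤ E_{γ₁}(ρ₁‖σ₁) + γ₁·E_{γ₂}(ρ₂‖σ₂) and E_{γ₁γ₂}(ρ₁⊗ρ₂ ‖ σ₁⊗σ₂) ≤ E_{γ₁}(ρ₂‖σ₂) + γ₁·E_{γ₂}(ρ₁‖σ₁) hold. -/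
open scoped BigOperators ComplexOrder

/-! Split `ρ₁ ⊗ ρ₂ - γ₁γ₂ σ₁ ⊗ σ₂ = (ρ₁ - γ₁σ₁) ⊗ ρ₂ + γ₁σ₁ ⊗ (ρ₂ - γ₂σ₂)` (or the same with the
roles of the two factors exchanged). For Hermitian `A`, `C` and positive semidefinite `B`, `D`,
the Jordan decompositions `A = A₊ - A₋`, `C = C₊ - C₋` write `A ⊗ B + D ⊗ C` as `M - N` with
`M = A₊ ⊗ B + D ⊗ C₊` and `N` positive semidefinite, and `Tr (M - N)₊ ≤ Tr M` because in an
eigenbasis of `M - N` every eigenvalue is at most the corresponding diagonal entry of `M`, which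
is nonnegative. Since `Tr M = Tr A₊ · Tr B + Tr D · Tr C₊`, the traces `Tr ρᵢ = Tr σᵢ = 1` give
the two bounds. -/

open Matrix Kronecker

lemma Matrix.IsHermitian.sub_ofReal_smul {n : Type*} {ρ σ : Matrix n n ℂ} (hρ : ρ.IsHermitian)
    (hσ : σ.IsHermitian) (γ : ℝ) : (ρ - (γ : ℂ) • σ).IsHermitian :=
  hρ.sub (hσ.smul (Complex.conj_ofReal γ))

variable {n m : Type*} [Fintype n] [DecidableEq n] [Fintype m] [DecidableEq m]

lemma posPartTrace_sub_le {M N : Matrix n n ℂ} (hM : M.PosSemidef) (hN : N.PosSemidef) :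
    posPartTrace (M - N) ≤ M.trace.re := by
  have hX := hM.isHermitian.sub hN.isHermitian
  have hdiag := hX.conjStarAlgAut_star_eigenvectorUnitary
  have hU := Unitary.mul_star_self_of_mem hX.eigenvectorUnitary.2
  rw [Unitary.conjStarAlgAut_star_apply] at hdiag
  rw [posPartTrace, dif_pos hX]
  generalize (hX.eigenvectorUnitary : Matrix n n ℂ) = U at hdiag hU
  rw [star_eq_conjTranspose] at hdiag hU
  have heig (i : n) : hX.eigenvalues i = ((Uᴴ * M * U) i i).re - ((Uᴴ * N * U) i i).re := by
    have := congrArg (fun X => (X i i).re) hdiag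
    simpa [Matrix.mul_sub, Matrix.sub_mul] using this.symm
  have hM' := hM.conjTranspose_mul_mul_same U
  have hN' := hN.conjTranspose_mul_mul_same U
  calc ∑ i, max (hX.eigenvalues i) 0 ≤ ∑ i, ((Uᴴ * M * U) i i).re :=
        Finset.sum_le_sum fun i _ => max_le
          (by linarith [heig i, (Complex.nonneg_iff.mp (hN'.diag_nonneg (i := i))).1])
          (Complex.nonneg_iff.mp (hM'.diag_nonneg (i := i))).1
    _ = (Uᴴ * M * U).trace.re := by simp [trace, Complex.re_sum]
    _ = M.trace.re := by rw [trace_mul_cycle, hU, Matrix.one_mul]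

lemma Matrix.IsHermitian.exists_posSemidef_sub_eq {A : Matrix n n ℂ} (hA : A.IsHermitian) :
    ∃ P N : Matrix n n ℂ, P.PosSemidef ∧ N.PosSemidef ∧ A = P - N ∧
      P.trace = posPartTrace A := by
  have hspec := hA.spectral_theorem
  have hU := Unitary.star_mul_self_of_mem hA.eigenvectorUnitary.2
  rw [Unitary.conjStarAlgAut_apply] at hspec
  rw [posPartTrace, dif_pos hA]
  generalize (hA.eigenvectorUnitary : Matrix n n ℂ) = U at hspec hU
  rw [star_eq_conjTranspose] at hspec hU
  have conj_diagonal_posSemidef (f : ℝ → ℝ) (hf : ∀ x, 0 ≤ f x) :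
      (U * diagonal (fun i => (f (hA.eigenvalues i) : ℂ)) * Uᴴ).PosSemidef :=
    (PosSemidef.diagonal fun i => Complex.zero_le_real.mpr (hf _)).mul_mul_conjTranspose_same U
  refine ⟨_, _, conj_diagonal_posSemidef (max · 0) fun _ => le_max_right _ _,
    conj_diagonal_posSemidef (fun x => max (-x) 0) fun _ => le_max_right _ _, ?_, ?_⟩
  · simp only [← Matrix.mul_sub, ← Matrix.sub_mul, diagonal_sub, ← Complex.ofReal_sub,
      max_zero_sub_max_neg_zero_eq_self]
    exact hspec
  · rw [trace_mul_cycle, hU, Matrix.one_mul, trace_diagonal, Complex.ofReal_sum]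

lemma posPartTrace_kronecker_add_le {A D : Matrix n n ℂ} {B C : Matrix m m ℂ}
    (hA : A.IsHermitian) (hB : B.PosSemidef) (hC : C.IsHermitian) (hD : D.PosSemidef) :
    posPartTrace (A ⊗ₖ B + D ⊗ₖ C) ≤ posPartTrace A * B.trace.re + D.trace.re * posPartTrace C := by
  obtain ⟨P₁, N₁, hP₁, hN₁, rfl, htr₁⟩ := hA.exists_posSemidef_sub_eq
  obtain ⟨P₂, N₂, hP₂, hN₂, rfl, htr₂⟩ := hC.exists_posSemidef_sub_eq
  have hsplit : (P₁ - N₁) ⊗ₖ B + D ⊗ₖ (P₂ - N₂) = (P₁ ⊗ₖ B + D ⊗ₖ P₂) - (N₁ ⊗ₖ B + D ⊗ₖ N₂) := by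
    ext a b
    simp only [Matrix.add_apply, Matrix.sub_apply, kroneckerMap_apply]
    ring
  rw [hsplit]
  refine (posPartTrace_sub_le ((hP₁.kronecker hB).add (hD.kronecker hP₂))
    ((hN₁.kronecker hB).add (hD.kronecker hN₂))).trans_eq ?_
  rw [trace_add, trace_kronecker, trace_kronecker, htr₁, htr₂, Complex.add_re,
    Complex.re_ofReal_mul, Complex.re_mul_ofReal]

lemma hsDiv_mul_kronecker_le_left {ρ₁ σ₁ : Matrix n n ℂ} {ρ₂ σ₂ : Matrix m m ℂ}
    (hρ₁ : ρ₁.IsHermitian) (hσ₁ : σ₁.PosSemidef) (hρ₂ : ρ₂.PosSemidef) (hσ₂ : σ₂.IsHermitian)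
    {γ₁ : ℝ} (hγ₁ : 0 ≤ γ₁) (γ₂ : ℝ) :
    hsDiv (γ₁ * γ₂) (ρ₁ ⊗ₖ ρ₂) (σ₁ ⊗ₖ σ₂) ≤
      hsDiv γ₁ ρ₁ σ₁ * ρ₂.trace.re + γ₁ * σ₁.trace.re * hsDiv γ₂ ρ₂ σ₂ := by
  have hsplit : ρ₁ ⊗ₖ ρ₂ - ((γ₁ * γ₂ : ℝ) : ℂ) • (σ₁ ⊗ₖ σ₂) =
      (ρ₁ - (γ₁ : ℂ) • σ₁) ⊗ₖ ρ₂ + ((γ₁ : ℂ) • σ₁) ⊗ₖ (ρ₂ - (γ₂ : ℂ) • σ₂) := by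
    ext a b
    simp only [Matrix.add_apply, Matrix.sub_apply, Matrix.smul_apply, kroneckerMap_apply,
      smul_eq_mul, Complex.ofReal_mul]
    ring
  have hγσ₁ : ((γ₁ : ℂ) • σ₁).PosSemidef := hσ₁.smul (Complex.zero_le_real.mpr hγ₁)
  rw [hsDiv, hsplit]
  refine (posPartTrace_kronecker_add_le (hρ₁.sub_ofReal_smul hσ₁.isHermitian γ₁) hρ₂
    (hρ₂.isHermitian.sub_ofReal_smul hσ₂ γ₂) hγσ₁).trans_eq ?_
  rw [trace_smul, smul_eq_mul, Complex.re_ofReal_mul, hsDiv, hsDiv]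

lemma hsDiv_mul_kronecker_le_right {ρ₁ σ₁ : Matrix n n ℂ} {ρ₂ σ₂ : Matrix m m ℂ}
    (hρ₁ : ρ₁.PosSemidef) (hσ₁ : σ₁.IsHermitian) (hρ₂ : ρ₂.IsHermitian) (hσ₂ : σ₂.PosSemidef)
    {γ₁ : ℝ} (hγ₁ : 0 ≤ γ₁) (γ₂ : ℝ) :
    hsDiv (γ₁ * γ₂) (ρ₁ ⊗ₖ ρ₂) (σ₁ ⊗ₖ σ₂) ≤
      hsDiv γ₂ ρ₁ σ₁ * (γ₁ * σ₂.trace.re) + ρ₁.trace.re * hsDiv γ₁ ρ₂ σ₂ := by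
  have hsplit : ρ₁ ⊗ₖ ρ₂ - ((γ₁ * γ₂ : ℝ) : ℂ) • (σ₁ ⊗ₖ σ₂) =
      (ρ₁ - (γ₂ : ℂ) • σ₁) ⊗ₖ ((γ₁ : ℂ) • σ₂) + ρ₁ ⊗ₖ (ρ₂ - (γ₁ : ℂ) • σ₂) := by
    ext a b
    simp only [Matrix.add_apply, Matrix.sub_apply, Matrix.smul_apply, kroneckerMap_apply,
      smul_eq_mul, Complex.ofReal_mul]
    ring
  have hγσ₂ : ((γ₁ : ℂ) • σ₂).PosSemidef := hσ₂.smul (Complex.zero_le_real.mpr hγ₁)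
  rw [hsDiv, hsplit]
  refine (posPartTrace_kronecker_add_le (hρ₁.isHermitian.sub_ofReal_smul hσ₁ γ₂) hγσ₂
    (hρ₂.sub_ofReal_smul hσ₂.isHermitian γ₁) hρ₁).trans_eq ?_
  rw [trace_smul, smul_eq_mul, Complex.re_ofReal_mul, hsDiv, hsDiv]

open Kronecker in
theorem hsDiv_kronecker_subadditive_general {d₁ d₂ : ℕ}
    (ρ₁ σ₁ : Matrix (Fin d₁) (Fin d₁) ℂ) (ρ₂ σ₂ : Matrix (Fin d₂) (Fin d₂) ℂ)
    (hρ₁ : IsDensity ρ₁) (hσ₁ : IsDensity σ₁)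
    (hρ₂ : IsDensity ρ₂) (hσ₂ : IsDensity σ₂)
    (γ₁ γ₂ : ℝ) (hγ₁ : 1 ≤ γ₁) :
    hsDiv (γ₁ * γ₂) (ρ₁ ⊗ₖ ρ₂) (σ₁ ⊗ₖ σ₂) ≤ hsDiv γ₁ ρ₁ σ₁ + γ₁ * hsDiv γ₂ ρ₂ σ₂ ∧
    hsDiv (γ₁ * γ₂) (ρ₁ ⊗ₖ ρ₂) (σ₁ ⊗ₖ σ₂) ≤ hsDiv γ₁ ρ₂ σ₂ + γ₁ * hsDiv γ₂ ρ₁ σ₁ := by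
  have hγ₁_nonneg : 0 ≤ γ₁ := zero_le_one.trans hγ₁
  have htr {d : ℕ} {ρ : Matrix (Fin d) (Fin d) ℂ} (hρ : IsDensity ρ) : ρ.trace.re = 1 := by
    rw [hρ.2, Complex.one_re]
  constructor
  · calc _ ≤ hsDiv γ₁ ρ₁ σ₁ * ρ₂.trace.re + γ₁ * σ₁.trace.re * hsDiv γ₂ ρ₂ σ₂ :=
          hsDiv_mul_kronecker_le_left hρ₁.1.isHermitian hσ₁.1 hρ₂.1 hσ₂.1.isHermitian
            hγ₁_nonneg γ₂
      _ = _ := by rw [htr hρ₂, htr hσ₁, mul_one, mul_one]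
  · calc _ ≤ hsDiv γ₂ ρ₁ σ₁ * (γ₁ * σ₂.trace.re) + ρ₁.trace.re * hsDiv γ₁ ρ₂ σ₂ :=
          hsDiv_mul_kronecker_le_right hρ₁.1 hσ₁.1.isHermitian hρ₂.1.isHermitian hσ₂.1
            hγ₁_nonneg γ₂
      _ = _ := by rw [htr hσ₂, htr hρ₁]; ring

open Kronecker in
/-- Subadditivity of the hockey-stick divergence under tensor (Kronecker) products. -/
theorem hsDiv_kronecker_subadditive {d₁ d₂ : ℕ}
    (ρ₁ σ₁ : Matrix (Fin d₁) (Fin d₁) ℂ) (ρ₂ σ₂ : Matrix (Fin d₂) (Fin d₂) ℂ)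
    (hρ₁ : IsDensity ρ₁) (hσ₁ : IsDensity σ₁)
    (hρ₂ : IsDensity ρ₂) (hσ₂ : IsDensity σ₂)
    (γ₁ γ₂ : ℝ) (hγ₁ : 1 ≤ γ₁) (hγ₂ : 1 ≤ γ₂) :
    hsDiv (γ₁ * γ₂) (ρ₁ ⊗ₖ ρ₂) (σ₁ ⊗ₖ σ₂) ≤ hsDiv γ₁ ρ₁ σ₁ + γ₁ * hsDiv γ₂ ρ₂ σ₂ ∧
    hsDiv (γ₁ * γ₂) (ρ₁ ⊗ₖ ρ₂) (σ₁ ⊗ₖ σ₂) ≤ hsDiv γ₁ ρ₂ σ₂ + γ₁ * hsDiv γ₂ ρ₁ σ₁ :=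
  hsDiv_kronecker_subadditive_general ρ₁ σ₁ ρ₂ σ₂ hρ₁ hσ₁ hρ₂ hσ₂ γ₁ γ₂ hγ₁
end

section
/- Trace bound for the hockey-stick divergence: for any density operators ρ, σ, τ on a finite-dimensional complex Hilbert space and any γ ≥ 1, E_γ(ρ‖σ) + E_γ(ρ‖τ) ≥ (γ/2)·‖τ − σ‖₁ + (1−γ). -/
open scoped BigOperators ComplexOrder

/-! Let `P` be the spectral projection of `τ - σ` onto its positive eigenspaces. For Hermitian `A`
and `0 ≤ Q ≤ 1` one has `Re Tr(Q A) ≤ Tr A₊`; applying this to `P` with `ρ - γσ` and to `1 - P`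
with `ρ - γτ` and adding gives
`E_γ(ρ‖σ) + E_γ(ρ‖τ) ≥ Tr ρ - γ Tr τ + γ Tr(P (τ - σ)) = 1 - γ + γ Tr (τ - σ)₊`,
and `Tr (τ - σ)₊ = ‖τ - σ‖₁ / 2` because `τ - σ` is traceless. -/

open Matrix
open scoped MatrixOrder

namespace Matrix

variable {n 𝕜 : Type*} [Fintype n] [DecidableEq n] [RCLike 𝕜]

lemma IsHermitian.trace_cfc {A : Matrix n n 𝕜} (hA : A.IsHermitian) (f : ℝ → ℝ) :
    (cfc f A).trace = ∑ i, (f (hA.eigenvalues i) : 𝕜) := by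
  rw [hA.cfc_eq, IsHermitian.cfc, Unitary.conjStarAlgAut_apply, trace_mul_cycle,
    Unitary.coe_star_mul_self, one_mul, trace_diagonal]
  rfl

lemma trace_mul_nonneg {A B : Matrix n n 𝕜} (hA : 0 ≤ A) (hB : 0 ≤ B) : 0 ≤ (A * B).trace := by
  rw [← CFC.sqrt_mul_sqrt_self B, ← mul_assoc, trace_mul_cycle]
  exact (nonneg_iff_posSemidef.1 (conjugate_nonneg_of_nonneg hA (CFC.sqrt_nonneg B))).trace_nonneg

noncomputable def posSpectralProj (X : Matrix n n 𝕜) : Matrix n n 𝕜 :=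
  cfc (Set.indicator (Set.Ioi (0 : ℝ)) 1) X

lemma posSpectralProj_nonneg (X : Matrix n n 𝕜) : 0 ≤ posSpectralProj X := by
  unfold posSpectralProj
  exact cfc_nonneg fun x _ => Set.indicator_nonneg (fun _ _ => zero_le_one) x

lemma posSpectralProj_le_one (X : Matrix n n 𝕜) : posSpectralProj X ≤ 1 := by
  unfold posSpectralProj
  exact cfc_le_one _ X fun x _ => Set.indicator_le_self' (fun _ _ => zero_le_one) x

lemma posSpectralProj_mul_self {X : Matrix n n 𝕜} (hX : X.IsHermitian) :
    posSpectralProj X * X = X⁺ := by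
  have hX' : IsSelfAdjoint X := hX
  conv_lhs => arg 2; rw [← cfc_id' ℝ X]
  rw [posSpectralProj, ← cfc_mul _ _ X (finite_real_spectrum.continuousOn _), CFC.posPart_def,
    cfcₙ_eq_cfc]
  refine cfc_congr fun x _ => ?_
  by_cases hx : 0 < x
  · simp [hx, hx.le]
  · simp [hx, posPart_eq_zero.2 (not_lt.1 hx)]

end Matrix

section

variable {n : Type*} [Fintype n] [DecidableEq n]

lemma posPartTrace_eq_re_trace_posPart {A : Matrix n n ℂ} (hA : A.IsHermitian) :
    posPartTrace A = (A⁺).trace.re := by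
  have hA' : IsSelfAdjoint A := hA
  rw [CFC.posPart_def, cfcₙ_eq_cfc, hA.trace_cfc, posPartTrace, dif_pos hA, Complex.re_sum]
  simp [posPart_def, max_comm]

lemma traceNorm_eq_re_trace_abs (A : Matrix n n ℂ) : traceNorm A = (CFC.abs A).trace.re := by
  have hM := posSemidef_conjTranspose_mul_self A
  rw [CFC.abs, star_eq_conjTranspose, CFC.sqrt_eq_real_sqrt _ hM.nonneg, cfcₙ_eq_cfc,
    hM.isHermitian.trace_cfc, traceNorm, Complex.re_sum]
  simp

lemma traceNorm_eq_two_mul_re_trace_posPart {X : Matrix n n ℂ} (hX : X.IsHermitian)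
    (htr : X.trace = 0) : traceNorm X = 2 * (X⁺).trace.re := by
  have hX' : IsSelfAdjoint X := hX
  have h := congrArg (fun M => M.trace.re) (CFC.abs_add_self X)
  simp only [trace_add, trace_smul, htr, add_zero] at h
  rw [traceNorm_eq_re_trace_abs, h]
  simp

lemma re_trace_mul_le_posPartTrace_s8 {A Q : Matrix n n ℂ} (hA : A.IsHermitian) (hQ₀ : 0 ≤ Q)
    (hQ₁ : Q ≤ 1) : (Q * A).trace.re ≤ posPartTrace A := by
  have hA' : IsSelfAdjoint A := hA
  have hneg : 0 ≤ (Q * A⁻).trace := trace_mul_nonneg hQ₀ (CFC.negPart_nonneg A)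
  have hpos : 0 ≤ ((1 - Q) * A⁺).trace :=
    trace_mul_nonneg (sub_nonneg.2 hQ₁) (CFC.posPart_nonneg A)
  have hsplit : (Q * A).trace = (A⁺).trace - ((1 - Q) * A⁺).trace - (Q * A⁻).trace := by
    conv_lhs => rw [← CFC.posPart_sub_negPart A]
    rw [mul_sub, sub_mul, one_mul, trace_sub, trace_sub]
    ring
  rw [posPartTrace_eq_re_trace_posPart hA, hsplit, Complex.sub_re, Complex.sub_re]
  linarith [(Complex.nonneg_iff.1 hneg).1, (Complex.nonneg_iff.1 hpos).1]

lemma re_trace_mul_le_hsDiv {ρ σ Q : Matrix n n ℂ} (hρ : ρ.IsHermitian) (hσ : σ.IsHermitian)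
    (γ : ℝ) (hQ₀ : 0 ≤ Q) (hQ₁ : Q ≤ 1) : (Q * (ρ - (γ : ℂ) • σ)).trace.re ≤ hsDiv γ ρ σ :=
  re_trace_mul_le_posPartTrace_s8 (hρ.sub (hσ.smul (Complex.conj_ofReal γ))) hQ₀ hQ₁

end

theorem hsDiv_trace_bound_general {d : ℕ} (ρ σ τ : Matrix (Fin d) (Fin d) ℂ)
    (hρ : IsDensity ρ) (hσ : IsDensity σ) (hτ : IsDensity τ)
    (γ : ℝ) :
    (γ / 2) * traceNorm (τ - σ) + (1 - γ) ≤ hsDiv γ ρ σ + hsDiv γ ρ τ := by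
  set P := posSpectralProj (τ - σ) with hP
  have hX : (τ - σ).IsHermitian := hτ.1.1.sub hσ.1.1
  have hE₁ : (P * (ρ - (γ : ℂ) • σ)).trace.re ≤ hsDiv γ ρ σ :=
    re_trace_mul_le_hsDiv hρ.1.1 hσ.1.1 γ (posSpectralProj_nonneg _) (posSpectralProj_le_one _)
  have hE₂ : ((1 - P) * (ρ - (γ : ℂ) • τ)).trace.re ≤ hsDiv γ ρ τ :=
    re_trace_mul_le_hsDiv hρ.1.1 hτ.1.1 γ (sub_nonneg.2 (posSpectralProj_le_one _))
      (sub_le_self 1 (posSpectralProj_nonneg _))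
  have hnorm := traceNorm_eq_two_mul_re_trace_posPart hX (by rw [trace_sub, hτ.2, hσ.2, sub_self])
  have hsum : P * (ρ - (γ : ℂ) • σ) + (1 - P) * (ρ - (γ : ℂ) • τ)
      = (γ : ℂ) • (τ - σ)⁺ + (ρ - (γ : ℂ) • τ) := by
    rw [← posSpectralProj_mul_self hX, ← hP]
    simp only [mul_sub, sub_mul, one_mul, mul_smul_comm, smul_sub]
    abel
  have htr := congrArg (fun M => M.trace.re) hsum
  simp only [trace_add, trace_sub, trace_smul, hρ.2, hτ.2,
    Complex.add_re, Complex.sub_re, smul_eq_mul, Complex.re_ofReal_mul, Complex.one_re] at htr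
  rw [hnorm]
  linarith

/-- Trace bound for the hockey-stick divergence. -/
theorem hsDiv_trace_bound {d : ℕ} (ρ σ τ : Matrix (Fin d) (Fin d) ℂ)
    (hρ : IsDensity ρ) (hσ : IsDensity σ) (hτ : IsDensity τ)
    (γ : ℝ) (hγ : 1 ≤ γ) :
    (γ / 2) * traceNorm (τ - σ) + (1 - γ) ≤ hsDiv γ ρ σ + hsDiv γ ρ τ :=
  hsDiv_trace_bound_general ρ σ τ hρ hσ hτ γ
end

section
/- Measurement-free characterization of differential privacy: for density operators ρ', σ' on a finite-dimensional complex Hilbert space, ε ≥ 0 and δ ≥ 0, the condition 'Tr[M ρ'] ≤ e^ε·Tr[M σ'] + δ for every operator M with 0 ≤ M ≤ I' holds if and only if E_{e^ε}(ρ'‖σ') ≤ δ. -/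
open scoped BigOperators ComplexOrder

/-!
Diagonalize the Hermitian matrix `X = ρ - γσ` as `U diag(λ) U*`. For a measurement operator `M`,
`Re Tr[M X] = ∑ᵢ Nᵢᵢ λᵢ` with `N = U* M U`, and `0 ≤ M ≤ 1` forces `0 ≤ Nᵢᵢ ≤ 1`; hence
`Re Tr[M X] ≤ ∑ᵢ max λᵢ 0 = Tr[X₊]`, with equality for the projection onto the eigenvectors of
positive eigenvalue. So `Tr[X₊]` is the largest value of `Tr[M ρ] - γ Tr[M σ]` over measurements.
-/

lemma mul_le_max_zero_of_nonneg_of_le_one {t a : ℝ} (h₀ : 0 ≤ t) (h₁ : t ≤ 1) :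
    t * a ≤ max a 0 := by
  rcases le_total 0 a with ha | ha
  · exact (mul_le_of_le_one_left ha h₁).trans (le_max_left a 0)
  · exact (mul_nonpos_of_nonneg_of_nonpos h₀ ha).trans (le_max_right a 0)

namespace Matrix

variable {n : Type*} [Fintype n]

lemma re_trace_mul_sub_ofReal_smul (M A B : Matrix n n ℂ) (c : ℝ) :
    (M * (A - (c : ℂ) • B)).trace.re = (M * A).trace.re - c * (M * B).trace.re := by
  rw [Matrix.mul_sub, trace_sub, Matrix.mul_smul, trace_smul, smul_eq_mul, Complex.sub_re,
    Complex.re_ofReal_mul]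

variable [DecidableEq n] {X : Matrix n n ℂ}

lemma PosSemidef.one_sub_star_mul_mul_unitary {M : Matrix n n ℂ} (hM : (1 - M).PosSemidef)
    (U : unitaryGroup n ℂ) : (1 - star (U : Matrix n n ℂ) * M * U).PosSemidef := by
  have h := hM.conjTranspose_mul_mul_same (U : Matrix n n ℂ)
  rwa [Matrix.mul_sub, Matrix.sub_mul, Matrix.mul_one, ← star_eq_conjTranspose,
    Unitary.coe_star_mul_self] at h

namespace IsHermitian

lemma posPartTrace_eq_s10 (hX : X.IsHermitian) :
    posPartTrace X = ∑ i, max (hX.eigenvalues i) 0 :=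
  dif_pos hX

lemma re_trace_mul_eq_sum (hX : X.IsHermitian) (M : Matrix n n ℂ) :
    (M * X).trace.re =
      ∑ i, ((star (hX.eigenvectorUnitary : Matrix n n ℂ) * M * hX.eigenvectorUnitary) i i).re *
        hX.eigenvalues i := by
  conv_lhs => rw [hX.spectral_theorem, Unitary.conjStarAlgAut_apply]
  rw [← Matrix.mul_assoc, ← Matrix.mul_assoc, Matrix.trace_mul_comm, ← Matrix.mul_assoc,
    ← Matrix.mul_assoc, trace, Complex.re_sum]
  simp [Matrix.mul_diagonal, Complex.mul_re]

lemma re_trace_mul_le_posPartTrace (hX : X.IsHermitian) {M : Matrix n n ℂ}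
    (hM : M.PosSemidef) (hM₁ : (1 - M).PosSemidef) :
    (M * X).trace.re ≤ posPartTrace X := by
  set U := hX.eigenvectorUnitary
  have hN : (star (U : Matrix n n ℂ) * M * U).PosSemidef := by
    simpa only [star_eq_conjTranspose] using hM.conjTranspose_mul_mul_same (U : Matrix n n ℂ)
  have hN₁ := hM₁.one_sub_star_mul_mul_unitary U
  rw [hX.re_trace_mul_eq_sum, hX.posPartTrace_eq_s10]
  refine Finset.sum_le_sum fun i _ => mul_le_max_zero_of_nonneg_of_le_one ?_ ?_
  · exact (Complex.le_def.mp (hN.diag_nonneg (i := i))).1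
  · have := (Complex.le_def.mp (hN₁.diag_nonneg (i := i))).1
    simp only [sub_apply, one_apply_eq, Complex.zero_re, Complex.sub_re, Complex.one_re] at this
    linarith

lemma exists_re_trace_mul_eq_posPartTrace (hX : X.IsHermitian) :
    ∃ M : Matrix n n ℂ, M.PosSemidef ∧ (1 - M).PosSemidef ∧
      (M * X).trace.re = posPartTrace X := by
  set U := hX.eigenvectorUnitary
  let D : Matrix n n ℂ := diagonal fun i => if 0 < hX.eigenvalues i then 1 else 0
  have hD : D.PosSemidef := posSemidef_diagonal_iff.mpr fun i => by split_ifs <;> simp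
  have hD₁ : (1 - D).PosSemidef := by
    rw [← diagonal_one, diagonal_sub]
    exact posSemidef_diagonal_iff.mpr fun i => by split_ifs <;> simp
  have hconj : star (U : Matrix n n ℂ) * (U * D * star (U : Matrix n n ℂ)) * U = D := by
    simp only [Matrix.mul_assoc, Unitary.coe_star_mul_self, Matrix.mul_one]
    rw [← Matrix.mul_assoc, Unitary.coe_star_mul_self, Matrix.one_mul]
  refine ⟨U * D * star (U : Matrix n n ℂ), hD.mul_mul_conjTranspose_same _, ?_, ?_⟩
  · simpa only [Unitary.coe_star, star_star] using hD₁.one_sub_star_mul_mul_unitary (star U)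
  · rw [hX.re_trace_mul_eq_sum, hconj, hX.posPartTrace_eq_s10]
    refine Finset.sum_congr rfl fun i _ => ?_
    by_cases h : 0 < hX.eigenvalues i
    · simp [D, h, h.le]
    · simp [D, h, le_of_not_gt h]

lemma posPartTrace_le_iff (hX : X.IsHermitian) {δ : ℝ} :
    posPartTrace X ≤ δ ↔
      ∀ M : Matrix n n ℂ, M.PosSemidef → (1 - M).PosSemidef → (M * X).trace.re ≤ δ := by
  refine ⟨fun h M hM hM₁ => (hX.re_trace_mul_le_posPartTrace hM hM₁).trans h, fun h => ?_⟩
  obtain ⟨M, hM, hM₁, hMX⟩ := hX.exists_re_trace_mul_eq_posPartTrace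
  exact hMX ▸ h M hM hM₁

end IsHermitian

end Matrix

theorem dp_iff_hsDiv_le_general {d : ℕ} (ρ' σ' : Matrix (Fin d) (Fin d) ℂ)
    (hρ : IsDensity ρ') (hσ : IsDensity σ') (ε δ : ℝ) :
    (∀ M : Matrix (Fin d) (Fin d) ℂ, M.PosSemidef → (1 - M).PosSemidef →
        (M * ρ').trace.re ≤ Real.exp ε * (M * σ').trace.re + δ) ↔
      hsDiv (Real.exp ε) ρ' σ' ≤ δ := by
  have hX : (ρ' - (Real.exp ε : ℂ) • σ').IsHermitian :=
    hρ.1.isHermitian.sub (hσ.1.isHermitian.smul (Complex.conj_ofReal _))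
  rw [hsDiv, hX.posPartTrace_le_iff]
  refine forall_congr' fun M => imp_congr_right fun _ => imp_congr_right fun _ => ?_
  rw [Matrix.re_trace_mul_sub_ofReal_smul, sub_le_iff_le_add']

/-- Measurement-free characterization of differential privacy:
`Tr[M ρ'] ≤ e^ε Tr[M σ'] + δ` for all measurement operators `0 ≤ M ≤ 1` iff
`E_{e^ε}(ρ'‖σ') ≤ δ`. -/
theorem dp_iff_hsDiv_le {d : ℕ} (ρ' σ' : Matrix (Fin d) (Fin d) ℂ)
    (hρ : IsDensity ρ') (hσ : IsDensity σ') (ε δ : ℝ) (hε : 0 ≤ ε) (hδ : 0 ≤ δ) :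
    (∀ M : Matrix (Fin d) (Fin d) ℂ, M.PosSemidef → (1 - M).PosSemidef →
        (M * ρ').trace.re ≤ Real.exp ε * (M * σ').trace.re + δ) ↔
      hsDiv (Real.exp ε) ρ' σ' ≤ δ :=
  dp_iff_hsDiv_le_general ρ' σ' hρ hσ ε δ
end

section
/- Measured relative entropy bound under pure differential privacy: let ε ≥ 0 and let ρ', σ' be density operators on a finite-dimensional complex Hilbert space such that Tr[M ρ'] ≤ e^ε·Tr[M σ'] and Tr[M σ'] ≤ e^ε·Tr[M ρ'] for every operator 0 ≤ M ≤ I. Then for every POVM {M_x}_{x∈X} (a finite family of operators M_x ≥ 0 with Σ_x M_x = I), writing p_x = Tr[M_x ρ'] and q_x = Tr[M_x σ'], the Kullback–Leibler divergence satisfies Σ_x p_x·log(p_x/q_x) ≤ 2ε·E₁(ρ'‖σ') ≤ 2ε·(1 − e^{−ε}). -/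
open scoped BigOperators ComplexOrder

/-!
On every outcome of a measurement the pure DP condition pins the ratio `p_x / q_x` to
`[e^{-ε}, e^ε]`, so `p log (p/q) ≤ ε |p - q| + (p - q)`; summing, the KL divergence is at most
`ε ‖p - q‖₁ = 2ε Σ (p_x - q_x)⁺`. Grouping the outcomes with `p_x > q_x` into one effect shows
that this classical quantity is at most `E₁(ρ‖σ) = Tr[(ρ - σ)₊]`. Finally, for the projection
`P` onto the positive part of `ρ - σ`, the DP condition gives `Tr[Pσ] ≥ e^{-ε} Tr[Pρ]`, hence
`E₁ = Tr[Pρ] - Tr[Pσ] ≤ (1 - e^{-ε}) Tr[Pρ] ≤ 1 - e^{-ε}`.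
-/

open Matrix

section Effects

variable {n : Type*} [Fintype n] [DecidableEq n]

lemma re_diag_unitary_conj_mem_Icc {N : Matrix n n ℂ} (hN : N.PosSemidef)
    (hN1 : (1 - N).PosSemidef) (U : unitaryGroup n ℂ) (i : n) :
    ((star (U : Matrix n n ℂ) * N * U) i i).re ∈ Set.Icc 0 1 := by
  have hconj {A : Matrix n n ℂ} (hA : A.PosSemidef) :
      (star (U : Matrix n n ℂ) * A * U).PosSemidef :=
    hA.conjTranspose_mul_mul_same (U : Matrix n n ℂ)
  have h1 := (Complex.nonneg_iff.mp ((hconj hN).diag_nonneg (i := i))).1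
  have h2 := (Complex.nonneg_iff.mp ((hconj hN1).diag_nonneg (i := i))).1
  have hsub : star (U : Matrix n n ℂ) * (1 - N) * U = 1 - star (U : Matrix n n ℂ) * N * U := by
    rw [Matrix.mul_sub, Matrix.sub_mul, mul_one, Unitary.coe_star_mul_self]
  rw [hsub, Matrix.sub_apply, one_apply_eq, Complex.sub_re, Complex.one_re, sub_nonneg] at h2
  exact ⟨h1, h2⟩

lemma Matrix.IsHermitian.re_trace_mul_eq_sum_s13 {X : Matrix n n ℂ} (hX : X.IsHermitian)
    (N : Matrix n n ℂ) :
    (N * X).trace.re = ∑ i, ((star (hX.eigenvectorUnitary : Matrix n n ℂ) * N *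
      hX.eigenvectorUnitary) i i).re * hX.eigenvalues i := by
  conv_lhs => rw [hX.spectral_theorem, Unitary.conjStarAlgAut_apply, ← Matrix.mul_assoc,
    trace_mul_cycle, ← Matrix.mul_assoc]
  simp [Matrix.trace, Matrix.mul_diagonal, Complex.re_sum]

lemma re_trace_mul_le_posPartTrace_s13 {X N : Matrix n n ℂ} (hX : X.IsHermitian)
    (hN : N.PosSemidef) (hN1 : (1 - N).PosSemidef) :
    (N * X).trace.re ≤ posPartTrace X := by
  rw [hX.re_trace_mul_eq_sum_s13, posPartTrace, dif_pos hX]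
  refine Finset.sum_le_sum fun i _ => ?_
  obtain ⟨h0, h1⟩ := re_diag_unitary_conj_mem_Icc hN hN1 hX.eigenvectorUnitary i
  rcases le_total 0 (hX.eigenvalues i) with hev | hev
  · exact (mul_le_of_le_one_left hev h1).trans (le_max_left _ _)
  · exact (mul_nonpos_of_nonneg_of_nonpos h0 hev).trans (le_max_right _ _)

lemma Matrix.PosSemidef.re_trace_mul_nonneg {X N : Matrix n n ℂ} (hX : X.PosSemidef)
    (hN : N.PosSemidef) : 0 ≤ (N * X).trace.re := by
  rw [hX.1.re_trace_mul_eq_sum_s13]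
  refine Finset.sum_nonneg fun i _ => mul_nonneg ?_ (hX.eigenvalues_nonneg i)
  have := hN.conjTranspose_mul_mul_same (hX.1.eigenvectorUnitary : Matrix n n ℂ)
  exact (Complex.nonneg_iff.mp (this.diag_nonneg (i := i))).1

lemma exists_effect_re_trace_mul_eq_posPartTrace {X : Matrix n n ℂ} (hX : X.IsHermitian) :
    ∃ P : Matrix n n ℂ, P.PosSemidef ∧ (1 - P).PosSemidef ∧
      (P * X).trace.re = posPartTrace X := by
  set V : Matrix n n ℂ := (hX.eigenvectorUnitary : Matrix n n ℂ)
  have hstarV : star V * V = 1 := Unitary.star_mul_self_of_mem hX.eigenvectorUnitary.2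
  have hVstar : V * star V = 1 := Unitary.mul_star_self_of_mem hX.eigenvectorUnitary.2
  have hconj : ∀ {d : n → ℂ}, 0 ≤ d → (V * diagonal d * star V).PosSemidef := fun hd => by
    simpa [star_eq_conjTranspose] using (PosSemidef.diagonal hd).mul_mul_conjTranspose_same V
  -- the projection onto the span of the eigenvectors with positive eigenvalue
  set c : n → ℂ := fun i => if 0 < hX.eigenvalues i then 1 else 0
  refine ⟨V * diagonal c * star V, hconj fun i => by simp only [c]; split_ifs <;> simp, ?_, ?_⟩
  · have h1c : 0 ≤ 1 - c := fun i => by simp only [c, Pi.sub_apply]; split_ifs <;> simp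
    have h := hconj h1c
    have hdiag : diagonal (1 - c) = 1 - diagonal c := by
      ext i j; by_cases h : i = j <;> simp [h, one_apply]
    rwa [hdiag, Matrix.mul_sub, Matrix.sub_mul, mul_one, hVstar] at h
  · have hmid : star V * (V * diagonal c * star V) * V = diagonal c := by
      simp only [← Matrix.mul_assoc, hstarV, Matrix.one_mul]
      rw [Matrix.mul_assoc, hstarV, Matrix.mul_one]
    rw [hX.re_trace_mul_eq_sum_s13, hmid, posPartTrace, dif_pos hX]
    refine Finset.sum_congr rfl fun i _ => ?_
    simp only [diagonal_apply_eq, c]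
    split_ifs with h
    · simp [h.le]
    · simp [not_lt.mp h]

end Effects

section POVM

variable {n ι : Type*} [DecidableEq n] [Fintype ι] {M : ι → Matrix n n ℂ}

lemma one_sub_sum_povm_posSemidef (hM : ∀ x, (M x).PosSemidef) (hMsum : ∑ x, M x = 1)
    (s : Finset ι) : (1 - ∑ x ∈ s, M x).PosSemidef := by
  classical
  rw [← hMsum, ← Finset.sum_sdiff_eq_sub (Finset.subset_univ s)]
  exact posSemidef_sum _ fun x _ => hM x

lemma sum_re_trace_povm_mul [Fintype n] (hMsum : ∑ x, M x = 1) (A : Matrix n n ℂ) :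
    ∑ x, (M x * A).trace.re = A.trace.re := by
  rw [← Complex.re_sum, ← trace_sum, ← Finset.sum_mul, hMsum, Matrix.one_mul]

lemma sum_posPart_re_trace_povm_mul_le_posPartTrace [Fintype n] {X : Matrix n n ℂ}
    (hX : X.IsHermitian) (hM : ∀ x, (M x).PosSemidef) (hMsum : ∑ x, M x = 1) :
    ∑ x, ((M x * X).trace.re)⁺ ≤ posPartTrace X := by
  classical
  -- group the outcomes with positive weight into a single effect
  set s := Finset.univ.filter fun x => 0 < (M x * X).trace.re
  have hpos : ∑ x, ((M x * X).trace.re)⁺ = ((∑ x ∈ s, M x) * X).trace.re := by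
    rw [Finset.sum_mul, trace_sum, Complex.re_sum, Finset.sum_filter]
    refine Finset.sum_congr rfl fun x _ => ?_
    split_ifs with h
    · exact posPart_eq_self.mpr h.le
    · exact posPart_eq_zero.mpr (not_lt.mp h)
  rw [hpos]
  exact re_trace_mul_le_posPartTrace_s13 hX (posSemidef_sum _ fun x _ => hM x)
    (one_sub_sum_povm_posSemidef hM hMsum s)

end POVM

lemma hsDiv_one {n : Type*} [Fintype n] [DecidableEq n] (ρ σ : Matrix n n ℂ) :
    hsDiv 1 ρ σ = posPartTrace (ρ - σ) := by
  simp [hsDiv]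

lemma hsDiv_one_le_one_sub_exp_neg {n : Type*} [Fintype n] [DecidableEq n] {ε : ℝ}
    (hε : 0 ≤ ε) {ρ σ : Matrix n n ℂ} (hρ : IsDensity ρ) (hσ : σ.IsHermitian)
    (hDP : ∀ P : Matrix n n ℂ, P.PosSemidef → (1 - P).PosSemidef →
      (P * ρ).trace.re ≤ Real.exp ε * (P * σ).trace.re) :
    hsDiv 1 ρ σ ≤ 1 - Real.exp (-ε) := by
  obtain ⟨P, hP, hP1, hPtr⟩ := exists_effect_re_trace_mul_eq_posPartTrace (hρ.1.1.sub hσ)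
  set a := (P * ρ).trace.re
  have hsplit : hsDiv 1 ρ σ = a - (P * σ).trace.re := by
    rw [hsDiv_one, ← hPtr, Matrix.mul_sub, trace_sub, Complex.sub_re]
  have ha : a ≤ 1 := by
    have h := hρ.1.re_trace_mul_nonneg hP1
    rwa [Matrix.sub_mul, Matrix.one_mul, trace_sub, Complex.sub_re, hρ.2, Complex.one_re,
      sub_nonneg] at h
  have hb : Real.exp (-ε) * a ≤ (P * σ).trace.re := by
    calc Real.exp (-ε) * a ≤ Real.exp (-ε) * (Real.exp ε * (P * σ).trace.re) :=
          mul_le_mul_of_nonneg_left (hDP P hP hP1) (Real.exp_nonneg _)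
      _ = (P * σ).trace.re := by
          rw [← mul_assoc, ← Real.exp_add, neg_add_cancel, Real.exp_zero, one_mul]
  have hexp : Real.exp (-ε) ≤ 1 := Real.exp_le_one_iff.mpr (neg_nonpos.mpr hε)
  calc hsDiv 1 ρ σ ≤ a - Real.exp (-ε) * a := by rw [hsplit]; linarith
    _ = (1 - Real.exp (-ε)) * a := by ring
    _ ≤ 1 - Real.exp (-ε) := mul_le_of_le_one_right (sub_nonneg.mpr hexp) ha

section KL

lemma abs_log_div_le {p q ε : ℝ} (hp : 0 < p) (hq : 0 < q) (hpq : p ≤ Real.exp ε * q)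
    (hqp : q ≤ Real.exp ε * p) : |Real.log (p / q)| ≤ ε := by
  rw [abs_le, Real.log_div hp.ne' hq.ne']
  have h₁ := Real.log_le_log hp hpq
  have h₂ := Real.log_le_log hq hqp
  rw [Real.log_mul (Real.exp_pos ε).ne' hq.ne', Real.log_exp] at h₁
  rw [Real.log_mul (Real.exp_pos ε).ne' hp.ne', Real.log_exp] at h₂
  constructor <;> linarith

lemma mul_log_div_le {p q ε : ℝ} (hq : 0 ≤ q) (hpq : p ≤ Real.exp ε * q)
    (hqp : q ≤ Real.exp ε * p) : p * Real.log (p / q) ≤ ε * |p - q| + (p - q) := by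
  rcases hq.eq_or_lt with rfl | hq
  · have hp : p = 0 := le_antisymm (by simpa using hpq) (by nlinarith [Real.exp_pos ε])
    simp [hp]
  have hp : 0 < p := pos_of_mul_pos_right (hq.trans_le hqp) (Real.exp_pos ε).le
  -- split `p log(p/q) = (p - q) log(p/q) + q log(p/q)`
  have h₁ : (p - q) * Real.log (p / q) ≤ ε * |p - q| := by
    calc (p - q) * Real.log (p / q) ≤ |p - q| * |Real.log (p / q)| := by
          rw [← abs_mul]; exact le_abs_self _
      _ ≤ |p - q| * ε := by gcongr; exact abs_log_div_le hp hq hpq hqp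
      _ = ε * |p - q| := mul_comm _ _
  have h₂ : q * Real.log (p / q) ≤ p - q := by
    calc q * Real.log (p / q) ≤ q * (p / q - 1) := by
          gcongr; exact Real.log_le_sub_one_of_pos (div_pos hp hq)
      _ = p - q := by field_simp
  linarith

lemma sum_mul_log_div_le {ι : Type*} [Fintype ι] {p q : ι → ℝ} {ε : ℝ} (hq : ∀ x, 0 ≤ q x)
    (hsum : ∑ x, p x = ∑ x, q x) (hpq : ∀ x, p x ≤ Real.exp ε * q x)
    (hqp : ∀ x, q x ≤ Real.exp ε * p x) :
    ∑ x, p x * Real.log (p x / q x) ≤ 2 * ε * ∑ x, (p x - q x)⁺ := by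
  have hsub : ∑ x, (p x - q x) = 0 := by rw [Finset.sum_sub_distrib, hsum, sub_self]
  have habs : ∑ x, |p x - q x| = 2 * ∑ x, (p x - q x)⁺ := by
    have hterm (a : ℝ) : |a| = 2 * a⁺ - a := by
      linarith [abs_add_eq_two_nsmul_posPart a, two_nsmul a⁺]
    rw [Finset.sum_congr rfl fun x _ => hterm _, Finset.sum_sub_distrib, hsub, ← Finset.mul_sum,
      sub_zero]
  calc ∑ x, p x * Real.log (p x / q x)
      ≤ ∑ x, (ε * |p x - q x| + (p x - q x)) :=
        Finset.sum_le_sum fun x _ => mul_log_div_le (hq x) (hpq x) (hqp x)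
    _ = 2 * ε * ∑ x, (p x - q x)⁺ := by
        rw [Finset.sum_add_distrib, ← Finset.mul_sum, habs, hsub]; ring

end KL

/-- Measured relative entropy bound under pure `ε`-differential privacy: the
Kullback–Leibler divergence of the measurement outcome distributions of any POVM is at
most `2ε E₁(ρ'‖σ') ≤ 2ε(1 - e^{-ε})`. -/
theorem measured_KL_bound_of_pure_dp {d m : ℕ} (ε : ℝ) (hε : 0 ≤ ε)
    (ρ' σ' : Matrix (Fin d) (Fin d) ℂ) (hρ : IsDensity ρ') (hσ : IsDensity σ')
    (hDP₁ : ∀ M : Matrix (Fin d) (Fin d) ℂ, M.PosSemidef → (1 - M).PosSemidef →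
        (M * ρ').trace.re ≤ Real.exp ε * (M * σ').trace.re)
    (hDP₂ : ∀ M : Matrix (Fin d) (Fin d) ℂ, M.PosSemidef → (1 - M).PosSemidef →
        (M * σ').trace.re ≤ Real.exp ε * (M * ρ').trace.re)
    (M : Fin m → Matrix (Fin d) (Fin d) ℂ) (hM : ∀ x, (M x).PosSemidef)
    (hMsum : ∑ x, M x = 1) :
    (∑ x, (M x * ρ').trace.re *
        Real.log ((M x * ρ').trace.re / (M x * σ').trace.re)) ≤
      2 * ε * hsDiv 1 ρ' σ' ∧
    2 * ε * hsDiv 1 ρ' σ' ≤ 2 * ε * (1 - Real.exp (-ε)) := by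
  have hM1 (x : Fin m) : (1 - M x).PosSemidef := by
    simpa using one_sub_sum_povm_posSemidef hM hMsum {x}
  have hsum : ∑ x, (M x * ρ').trace.re = ∑ x, (M x * σ').trace.re := by
    rw [sum_re_trace_povm_mul hMsum, sum_re_trace_povm_mul hMsum, hρ.2, hσ.2]
  have hKL := sum_mul_log_div_le (fun x => hσ.1.re_trace_mul_nonneg (hM x)) hsum
    (fun x => hDP₁ _ (hM x) (hM1 x)) (fun x => hDP₂ _ (hM x) (hM1 x))
  have hTV : ∑ x, ((M x * ρ').trace.re - (M x * σ').trace.re)⁺ ≤ hsDiv 1 ρ' σ' := by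
    simpa only [hsDiv_one, Matrix.mul_sub, trace_sub, Complex.sub_re] using
      sum_posPart_re_trace_povm_mul_le_posPartTrace (hρ.1.1.sub hσ.1.1) hM hMsum
  refine ⟨hKL.trans (by gcongr), ?_⟩
  gcongr
  exact hsDiv_one_le_one_sub_exp_neg hε hρ hσ.1.1 hDP₁
end
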